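/- arXiv:1311.3680 — 6 statements merged into one kernel-verified Lean document; each statement's English description precedes it below -/
import Mathlib

section
/- For n ≥ 1, sptbar(n) is odd if and only if n is a perfect square or twice a perfect square. -/
/-!
Summing over the choices of overlined part sizes, a partition with `s` distinct part sizes
contributes `2 ^ (s - 1)` times its number of smallest parts. Modulo 2 only the partitions
`d + d + ⋯ + d` survive, each contributing `n / d`, so `sptbar n ≡ σ(n) (mod 2)`. Modulo 2,
`σ(n)` counts the odd divisors of `n`, i.e. the divisors of its odd part `m`, and `m` has an odd
number of divisors exactly when it is a square, i.e. when `n` is a square or twice a square.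
-/

open scoped Classical

/-- The number of smallest parts of a multiset of positive integers
(the multiplicity of the minimum; `0` for the empty multiset). -/
noncomputable def numSmallest (M : Multiset ℕ) : ℕ :=
  (M.filter fun a => ∀ b ∈ M, a ≤ b).card

/-- `sptbar n` : the total number of smallest parts, summed over all overpartitions of `n`
whose smallest part is not overlined. -/
noncomputable def sptbar (n : ℕ) : ℕ :=
  ∑ p : Nat.Partition n, ∑ S ∈ p.parts.toFinset.powerset,
    if ∀ a ∈ S, ∃ b ∈ p.parts, b < a then numSmallest p.parts else 0

open Finset

theorem Finset.filter_powerset_forall_exists_lt {α : Type*} [LinearOrder α] {T : Finset α}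
    (hT : T.Nonempty) :
    {S ∈ T.powerset | ∀ a ∈ S, ∃ b ∈ T, b < a} = (T.erase (T.min' hT)).powerset := by
  ext S
  simp only [mem_filter, mem_powerset, Finset.subset_erase]
  constructor
  · rintro ⟨hST, hlt⟩
    refine ⟨hST, fun hmin => ?_⟩
    obtain ⟨b, hb, hbmin⟩ := hlt _ hmin
    exact (T.min'_le b hb).not_gt hbmin
  · rintro ⟨hST, hmin⟩
    exact ⟨hST, fun a ha => ⟨_, T.min'_mem hT,
      (T.min'_le a (hST ha)).lt_of_ne (ne_of_mem_of_not_mem ha hmin).symm⟩⟩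

theorem Finset.card_filter_powerset_forall_exists_lt {α : Type*} [LinearOrder α] (T : Finset α) :
    #{S ∈ T.powerset | ∀ a ∈ S, ∃ b ∈ T, b < a} = 2 ^ (#T - 1) := by
  obtain rfl | hT := T.eq_empty_or_nonempty
  · simp [filter_true_of_mem]
  · rw [filter_powerset_forall_exists_lt hT, card_powerset, card_erase_of_mem (T.min'_mem hT)]

theorem numSmallest_replicate (k d : ℕ) : numSmallest (Multiset.replicate k d) = k := by
  rw [numSmallest, Multiset.filter_eq_self.2, Multiset.card_replicate]
  intro a ha b hb
  rw [Multiset.eq_of_mem_replicate ha, Multiset.eq_of_mem_replicate hb]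

theorem sptbar_eq_sum_two_pow_mul (n : ℕ) :
    sptbar n = ∑ p : n.Partition, 2 ^ (#p.parts.toFinset - 1) * numSmallest p.parts := by
  refine sum_congr rfl fun p _ => ?_
  simp_rw [← Multiset.mem_toFinset (s := p.parts)]
  rw [← sum_filter, sum_const, card_filter_powerset_forall_exists_lt, smul_eq_mul]

open scoped ArithmeticFunction.sigma

namespace Nat.Partition

theorem parts_ne_zero {n : ℕ} (hn : n ≠ 0) (p : n.Partition) : p.parts ≠ 0 :=
  fun h => hn (by rw [← p.parts_sum, h, Multiset.sum_zero])

def uniform {n k : ℕ} (hk : k ∈ n.divisors) : n.Partition where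
  parts := Multiset.replicate k (n / k)
  parts_pos hi := by
    rw [Multiset.eq_of_mem_replicate hi]
    exact Nat.div_pos (Nat.divisor_le hk) (Nat.pos_of_mem_divisors hk)
  parts_sum := by
    rw [Multiset.sum_replicate, smul_eq_mul, Nat.mul_div_cancel' (Nat.dvd_of_mem_divisors hk)]

theorem card_toFinset_uniform_parts {n k : ℕ} (hk : k ∈ n.divisors) :
    #(uniform hk).parts.toFinset = 1 := by
  change #(Multiset.replicate k (n / k)).toFinset = 1
  rw [Multiset.toFinset_replicate, if_neg (Nat.pos_of_mem_divisors hk).ne', card_singleton]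

theorem eq_uniform_of_card_toFinset_parts_eq_one {n : ℕ} {p : n.Partition}
    (hp : #p.parts.toFinset = 1) :
    ∃ hk : p.parts.card ∈ n.divisors, uniform hk = p := by
  obtain ⟨hcard, d, hd⟩ := (Multiset.toFinset_card_eq_one_iff _).1 hp
  rw [Multiset.nsmul_singleton] at hd
  have hsum := p.parts_sum
  rw [hd, Multiset.sum_replicate, smul_eq_mul] at hsum
  have hd0 : d ≠ 0 := (p.parts_pos (hd ▸ Multiset.mem_replicate.2 ⟨hcard, rfl⟩)).ne'
  refine ⟨Nat.mem_divisors.2 ⟨⟨d, hsum.symm⟩, ?_⟩, ?_⟩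
  · rw [← hsum]; exact mul_ne_zero hcard hd0
  · ext1
    change Multiset.replicate _ (n / _) = _
    rw [Nat.div_eq_of_eq_mul_right (Nat.pos_of_ne_zero hcard) hsum.symm, ← hd]

theorem sum_numSmallest_card_toFinset_parts_eq_one (n : ℕ) :
    ∑ p : n.Partition with #p.parts.toFinset = 1, numSmallest p.parts = σ 1 n := by
  rw [ArithmeticFunction.sigma_one_apply]
  refine sum_bij' (fun p _ => p.parts.card) (fun k hk => uniform hk) ?_ ?_ ?_ ?_ ?_
  · intro p hp
    exact (eq_uniform_of_card_toFinset_parts_eq_one (mem_filter.1 hp).2).1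
  · intro k hk
    exact mem_filter.2 ⟨mem_univ _, card_toFinset_uniform_parts hk⟩
  · intro p hp
    exact (eq_uniform_of_card_toFinset_parts_eq_one (mem_filter.1 hp).2).2
  · intro k _
    exact Multiset.card_replicate _ _
  · intro p hp
    obtain ⟨hk, hp⟩ := eq_uniform_of_card_toFinset_parts_eq_one (mem_filter.1 hp).2
    rw [← hp, uniform, numSmallest_replicate, Multiset.card_replicate]

end Nat.Partition

theorem sptbar_cast_zmod_two {n : ℕ} (hn : n ≠ 0) : (sptbar n : ZMod 2) = (σ 1 n : ℕ) := by
  rw [sptbar_eq_sum_two_pow_mul, ← Nat.Partition.sum_numSmallest_card_toFinset_parts_eq_one,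
    sum_filter]
  push_cast
  refine sum_congr rfl fun p _ => ?_
  have hpos : 0 < #p.parts.toFinset :=
    card_pos.2 (Multiset.toFinset_nonempty.2 (p.parts_ne_zero hn))
  split_ifs with h
  · rw [h, pow_zero, one_mul]
  · have : (2 : ZMod 2) = 0 := rfl
    rw [this, zero_pow (by omega), zero_mul]

namespace Nat

theorem cast_sum_zmod_two (s : Finset ℕ) : ((∑ d ∈ s, d : ℕ) : ZMod 2) = #{d ∈ s | Odd d} := by
  rw [Nat.cast_sum, card_filter, Nat.cast_sum]
  refine sum_congr rfl fun d _ => ?_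
  split_ifs with hd
  · exact ZMod.natCast_eq_one_iff_odd.2 hd
  · exact ZMod.natCast_eq_zero_iff_even.2 (not_odd_iff_even.1 hd)

theorem filter_odd_divisors (n : ℕ) : {d ∈ n.divisors | Odd d} = (ordCompl[2] n).divisors := by
  obtain rfl | hn := eq_or_ne n 0
  · simp
  ext d
  simp only [mem_filter, mem_divisors, ne_eq, (ordCompl_pos 2 hn).ne', hn,
    not_false_eq_true, and_true]
  constructor
  · rintro ⟨hdn, hodd⟩
    have hcop : Coprime d (ordProj[2] n) := Coprime.pow_right _ hodd.coprime_two_right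
    exact hcop.dvd_of_dvd_mul_left (by rwa [ordProj_mul_ordCompl_eq_self])
  · intro hd
    exact ⟨hd.trans (ordCompl_dvd n 2), not_even_iff_odd.1 fun he =>
      not_dvd_ordCompl prime_two hn (he.two_dvd.trans hd)⟩

theorem isSquare_iff_even_factorization {m : ℕ} (hm : m ≠ 0) :
    IsSquare m ↔ ∀ p, Even (m.factorization p) := by
  constructor
  · rintro ⟨k, rfl⟩ p
    have hk : k ≠ 0 := by rintro rfl; exact hm rfl
    rw [factorization_mul hk hk, Finsupp.add_apply]
    exact Even.add_self _
  · intro h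
    refine ⟨m.factorization.prod fun p e => p ^ (e / 2), ?_⟩
    conv_lhs => rw [← prod_factorization_pow_eq_self hm]
    rw [← Finsupp.prod_mul]
    refine Finsupp.prod_congr fun p _ => ?_
    rw [← pow_add, ← two_mul, two_mul_div_two_of_even (h p)]

theorem odd_card_divisors_iff_isSquare {m : ℕ} (hm : m ≠ 0) :
    Odd #m.divisors ↔ IsSquare m := by
  rw [card_divisors hm, isSquare_iff_even_factorization hm, ← not_even_iff_odd,
    even_iff_two_dvd, Prime.dvd_finsetProd_iff prime_two.prime]
  simp only [not_exists, not_and]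
  refine ⟨fun h p => ?_, fun h p _ => ?_⟩
  · by_cases hp : p ∈ m.primeFactors
    · have := h p hp
      rw [even_iff]
      omega
    · rw [Finsupp.notMem_support_iff.1 (m.support_factorization ▸ hp)]
      exact Even.zero
  · have := (h p).two_dvd
    omega

theorem isSquare_ordCompl_two_iff (n : ℕ) :
    IsSquare (ordCompl[2] n) ↔ (∃ k, n = k ^ 2) ∨ ∃ k, n = 2 * k ^ 2 := by
  constructor
  · rintro ⟨r, hr⟩
    have hnr : n = 2 ^ n.factorization 2 * (r * r) := by rw [← hr, ordProj_mul_ordCompl_eq_self]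
    obtain ⟨b, hb | hb⟩ := even_or_odd' (n.factorization 2)
    · exact Or.inl ⟨2 ^ b * r, by rw [hnr, hb]; ring⟩
    · exact Or.inr ⟨2 ^ b * r, by rw [hnr, hb]; ring⟩
  · have hsq (k : ℕ) : IsSquare (ordCompl[2] (k ^ 2)) := ⟨ordCompl[2] k, by rw [sq, ordCompl_mul]⟩
    rintro (⟨k, rfl⟩ | ⟨k, rfl⟩)
    · exact hsq k
    · rw [ordCompl_mul, show ordCompl[2] 2 = 1 from ordCompl_self_pow (k := 1) prime_two, one_mul]
      exact hsq k

end Nat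

theorem odd_sigma_one_iff {n : ℕ} (hn : n ≠ 0) :
    Odd (σ 1 n) ↔ (∃ k, n = k ^ 2) ∨ ∃ k, n = 2 * k ^ 2 := by
  rw [← ZMod.natCast_eq_one_iff_odd, ArithmeticFunction.sigma_one_apply, Nat.cast_sum_zmod_two,
    Nat.filter_odd_divisors, ZMod.natCast_eq_one_iff_odd,
    Nat.odd_card_divisors_iff_isSquare (Nat.ordCompl_pos 2 hn).ne', Nat.isSquare_ordCompl_two_iff]

theorem sptbar_odd_iff (n : ℕ) (hn : 1 ≤ n) :
    Odd (sptbar n) ↔ (∃ k, n = k ^ 2) ∨ (∃ k, n = 2 * k ^ 2) := by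
  rw [← ZMod.natCast_eq_one_iff_odd, sptbar_cast_zmod_two (by omega), ZMod.natCast_eq_one_iff_odd,
    odd_sigma_one_iff (by omega)]
end

section
/- For n ≥ 1, sptbar1(n) is odd if and only if n is an odd perfect square. -/
open scoped Classical

/-- `sptbar1 n` : the total number of smallest parts, summed over all overpartitions of `n`
whose smallest part is odd and not overlined. -/
noncomputable def sptbar1 (n : ℕ) : ℕ :=
  ∑ p : Nat.Partition n, ∑ S ∈ p.parts.toFinset.powerset,
    if (∀ a ∈ S, ∃ b ∈ p.parts, b < a) ∧
        (∃ a ∈ p.parts, (∀ b ∈ p.parts, a ≤ b) ∧ Odd a) then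
      numSmallest p.parts else 0

lemma zmod2_cast_eq_one_iff (x : ℕ) : (x : ZMod 2) = 1 ↔ Odd x := by
  rw [Nat.odd_iff, ← ZMod.natCast_mod]
  rcases Nat.mod_two_eq_zero_or_one x with h | h <;> rw [h] <;> simp <;> decide

lemma zmod2_cast_eq_zero_iff (x : ℕ) : (x : ZMod 2) = 0 ↔ x % 2 = 0 := by
  rw [← ZMod.natCast_mod]
  rcases Nat.mod_two_eq_zero_or_one x with h | h <;> rw [h] <;> simp <;> decide

/-- Inner sum computation. -/
lemma inner_eq {n : ℕ} (p : Nat.Partition n) :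
    (∑ S ∈ p.parts.toFinset.powerset,
      if (∀ a ∈ S, ∃ b ∈ p.parts, b < a) ∧
          (∃ a ∈ p.parts, (∀ b ∈ p.parts, a ≤ b) ∧ Odd a) then
        numSmallest p.parts else 0)
    = if (∃ a ∈ p.parts, (∀ b ∈ p.parts, a ≤ b) ∧ Odd a) then
        2 ^ (p.parts.toFinset.card - 1) * numSmallest p.parts else 0 := by
  by_cases hC : ∃ a ∈ p.parts, (∀ b ∈ p.parts, a ≤ b) ∧ Odd a
  · rw [if_pos hC]
    obtain ⟨m, hm, hmin, hodd⟩ := hC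
    have hmem : m ∈ p.parts.toFinset := Multiset.mem_toFinset.mpr hm
    have hfilt : p.parts.toFinset.powerset.filter
        (fun S => (∀ a ∈ S, ∃ b ∈ p.parts, b < a) ∧
          (∃ a ∈ p.parts, (∀ b ∈ p.parts, a ≤ b) ∧ Odd a))
        = (p.parts.toFinset.erase m).powerset := by
      ext S
      simp only [Finset.mem_filter, Finset.mem_powerset, Finset.subset_erase]
      constructor
      · rintro ⟨hsub, h1, -⟩
        refine ⟨hsub, fun hmS => ?_⟩
        obtain ⟨b, hb, hbm⟩ := h1 m hmS
        exact absurd (hmin b hb) (not_le.mpr hbm)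
      · rintro ⟨hsub, hmS⟩
        refine ⟨hsub, fun a haS => ⟨m, hm, ?_⟩, ⟨m, hm, hmin, hodd⟩⟩
        have haP : a ∈ p.parts := Multiset.mem_toFinset.mp (hsub haS)
        have : a ≠ m := fun h => hmS (h ▸ haS)
        exact lt_of_le_of_ne (hmin a haP) (Ne.symm this)
    calc (∑ S ∈ p.parts.toFinset.powerset,
            if (∀ a ∈ S, ∃ b ∈ p.parts, b < a) ∧
                (∃ a ∈ p.parts, (∀ b ∈ p.parts, a ≤ b) ∧ Odd a) then
              numSmallest p.parts else 0)
        = ∑ S ∈ p.parts.toFinset.powerset.filter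
            (fun S => (∀ a ∈ S, ∃ b ∈ p.parts, b < a) ∧
              (∃ a ∈ p.parts, (∀ b ∈ p.parts, a ≤ b) ∧ Odd a)), numSmallest p.parts := by
          rw [Finset.sum_filter]
      _ = ((p.parts.toFinset.erase m).powerset).card * numSmallest p.parts := by
          rw [hfilt, Finset.sum_const, smul_eq_mul]
      _ = 2 ^ (p.parts.toFinset.card - 1) * numSmallest p.parts := by
          rw [Finset.card_powerset, Finset.card_erase_of_mem hmem]
  · simp [hC]

/-- the key predicate -/
def Pprop {n : ℕ} (p : Nat.Partition n) : Prop :=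
  (∃ a ∈ p.parts, (∀ b ∈ p.parts, a ≤ b) ∧ Odd a) ∧
    p.parts.toFinset.card = 1 ∧ Odd (numSmallest p.parts)

lemma sptbar1_cast (n : ℕ) :
    (sptbar1 n : ZMod 2)
      = ((Finset.univ.filter (fun p : Nat.Partition n => Pprop p)).card : ZMod 2) := by
  unfold sptbar1
  rw [Finset.card_filter, Nat.cast_sum, Nat.cast_sum]
  refine Finset.sum_congr rfl fun p _ => ?_
  rw [inner_eq]
  by_cases hC : ∃ a ∈ p.parts, (∀ b ∈ p.parts, a ≤ b) ∧ Odd a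
  · rw [if_pos hC]
    obtain ⟨m, hm, hmin, hodd⟩ := hC
    have hd : 1 ≤ p.parts.toFinset.card :=
      Finset.card_pos.mpr ⟨m, Multiset.mem_toFinset.mpr hm⟩
    rcases eq_or_lt_of_le hd with hd1 | hd2
    · -- exactly one distinct part
      rw [← hd1]
      simp only [Nat.sub_self, pow_zero, one_mul]
      by_cases hns : Odd (numSmallest p.parts)
      · have hP : Pprop p := ⟨⟨m, hm, hmin, hodd⟩, hd1.symm, hns⟩
        rw [if_pos hP, (zmod2_cast_eq_one_iff _).mpr hns, Nat.cast_one]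
      · have hP : ¬ Pprop p := fun h => hns h.2.2
        rw [if_neg hP, Nat.cast_zero, (zmod2_cast_eq_zero_iff _).mpr]
        rw [Nat.odd_iff] at hns; omega
    · -- at least two distinct parts
      have hP : ¬ Pprop p := fun h => by have := h.2.1; omega
      rw [if_neg hP, Nat.cast_zero, Nat.cast_mul, Nat.cast_pow]
      have h2 : ((2 : ℕ) : ZMod 2) = 0 := by decide
      rw [h2, zero_pow (by omega : p.parts.toFinset.card - 1 ≠ 0), zero_mul]
  · rw [if_neg hC]
    have hP : ¬ Pprop p := fun h => hC h.1
    rw [if_neg hP, Nat.cast_zero]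

lemma card_eq (n : ℕ) (hn : 1 ≤ n) :
    ((n.divisors.filter (fun m => Odd m ∧ Odd (n / m))).card : ℕ)
      = (Finset.univ.filter (fun p : Nat.Partition n => Pprop p)).card := by
  have hn0 : n ≠ 0 := by omega
  refine Finset.card_bij
    (fun m hm => ⟨Multiset.replicate (n / m) m, ?_, ?_⟩) ?_ ?_ ?_
  · intro i hi
    simp only [Finset.mem_filter, Nat.mem_divisors] at hm
    have := Multiset.eq_of_mem_replicate hi
    subst this
    exact hm.2.1.pos
  · simp only [Finset.mem_filter, Nat.mem_divisors] at hm
    rw [Multiset.sum_replicate, smul_eq_mul]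
    exact Nat.div_mul_cancel hm.1.1
  · -- maps into the filter set
    intro m hm
    simp only [Finset.mem_filter, Nat.mem_divisors] at hm
    obtain ⟨⟨hdvd, -⟩, hom, hoq⟩ := hm
    have hk0 : n / m ≠ 0 := by
      intro h; rw [h] at hoq; exact (Nat.not_odd_iff_even.mpr Even.zero) hoq
    have hmm : m ∈ Multiset.replicate (n / m) m := by
      rw [Multiset.mem_replicate]; exact ⟨hk0, rfl⟩
    refine Finset.mem_filter.mpr ⟨Finset.mem_univ _, ?_, ?_, ?_⟩
    · exact ⟨m, hmm, fun b hb => (Multiset.eq_of_mem_replicate hb) ▸ le_rfl, hom⟩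
    · rw [Multiset.toFinset_replicate, if_neg hk0]
      simp
    · unfold numSmallest
      rw [Multiset.filter_eq_self.mpr, Multiset.card_replicate]
      · exact hoq
      · intro a ha b hb
        rw [Multiset.eq_of_mem_replicate ha, Multiset.eq_of_mem_replicate hb]
  · -- injective
    intro m1 h1 m2 h2 heq
    simp only [Finset.mem_filter, Nat.mem_divisors] at h1 h2
    have hk1 : n / m1 ≠ 0 := by
      intro h; rw [h] at h1; exact (Nat.not_odd_iff_even.mpr Even.zero) h1.2.2
    have : m1 ∈ Multiset.replicate (n / m2) m2 := by
      have := congrArg Nat.Partition.parts heq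
      simp only at this
      rw [← this, Multiset.mem_replicate]
      exact ⟨hk1, rfl⟩
    exact Multiset.eq_of_mem_replicate this
  · -- surjective
    intro p hp
    obtain ⟨-, ⟨a, ha, hamin, haodd⟩, hcard, hns⟩ := Finset.mem_filter.mp hp
    obtain ⟨m, hmfin⟩ := Finset.card_eq_one.mp hcard
    have hall : ∀ b ∈ p.parts, b = m := fun b hb => by
      have : b ∈ p.parts.toFinset := Multiset.mem_toFinset.mpr hb
      rw [hmfin] at this
      exact Finset.mem_singleton.mp this
    have hrep : p.parts = Multiset.replicate (Multiset.card p.parts) m :=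
      Multiset.eq_replicate_card.mpr hall
    have ham : a = m := hall a ha
    have hm0 : 0 < m := p.parts_pos (ham ▸ ha)
    have hsum : Multiset.card p.parts * m = n := by
      have := p.parts_sum
      rw [hrep, Multiset.sum_replicate, smul_eq_mul] at this
      exact this
    have hdvd : m ∣ n := ⟨Multiset.card p.parts, by rw [mul_comm]; exact hsum.symm⟩
    have hq : n / m = Multiset.card p.parts :=
      Nat.div_eq_of_eq_mul_left hm0 hsum.symm
    have hnsval : numSmallest p.parts = Multiset.card p.parts := by
      unfold numSmallest
      rw [Multiset.filter_eq_self.mpr]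
      intro x hx b hb
      rw [hall x hx, hall b hb]
    have homm : Odd m := by rwa [ham] at haodd
    refine ⟨m, Finset.mem_filter.mpr ⟨Nat.mem_divisors.mpr ⟨hdvd, hn0⟩,
      homm, ?_⟩, ?_⟩
    · rw [hq, ← hnsval]; exact hns
    · apply Nat.Partition.ext
      simp only [hq, ← hrep]
  -- note: ordering of obligations for card_bij: hi, i_inj, i_surj

/-- Parity of a finset under an involution equals parity of its fixed points. -/
lemma invol_parity : ∀ (s : Finset ℕ) (f : ℕ → ℕ), (∀ a ∈ s, f a ∈ s) →
    (∀ a ∈ s, f (f a) = a) →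
    s.card % 2 = (s.filter fun a => f a = a).card % 2 := by
  intro s
  induction s using Finset.strongInduction with
  | _ s ih =>
    intro f hmap hinv
    by_cases hall : ∀ a ∈ s, f a = a
    · rw [Finset.filter_true_of_mem hall]
    · push_neg at hall
      obtain ⟨a, has, hfa⟩ := hall
      have hfas : f a ∈ s := hmap a has
      set t := (s.erase a).erase (f a) with ht
      have hfaea : f a ∈ s.erase a := Finset.mem_erase.mpr ⟨hfa, hfas⟩
      have htsub : t ⊆ s := fun x hx =>
        Finset.mem_of_mem_erase (Finset.mem_of_mem_erase hx)
      have hmemt : ∀ x, x ∈ t ↔ x ∈ s ∧ x ≠ a ∧ x ≠ f a := by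
        intro x
        simp only [ht, Finset.mem_erase]
        tauto
      have htss : t ⊂ s := Finset.ssubset_iff_of_subset htsub |>.mpr
        ⟨a, has, fun h => ((hmemt a).mp h).2.1 rfl⟩
      have hcard : t.card + 2 = s.card := by
        rw [ht, Finset.card_erase_of_mem hfaea, Finset.card_erase_of_mem has]
        have h1 : 1 ≤ s.card := Finset.card_pos.mpr ⟨a, has⟩
        have h2 : 1 ≤ (s.erase a).card := Finset.card_pos.mpr ⟨f a, hfaea⟩
        rw [Finset.card_erase_of_mem has] at h2
        omega
      have hmap' : ∀ b ∈ t, f b ∈ t := by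
        intro b hb
        obtain ⟨hbs, hba, hbfa⟩ := (hmemt b).mp hb
        refine (hmemt (f b)).mpr ⟨hmap b hbs, ?_, ?_⟩
        · intro h
          apply hbfa
          rw [← hinv b hbs, h]
        · intro h
          apply hba
          have := congrArg f h
          rw [hinv b hbs, hinv a has] at this
          exact this
      have hinv' : ∀ b ∈ t, f (f b) = b := fun b hb =>
        hinv b ((hmemt b).mp hb).1
      have hfilter : s.filter (fun b => f b = b) = t.filter (fun b => f b = b) := by
        ext b
        simp only [Finset.mem_filter, hmemt b]
        constructor
        · rintro ⟨hbs, hfb⟩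
          refine ⟨⟨hbs, ?_, ?_⟩, hfb⟩
          · rintro rfl; exact hfa hfb
          · rintro rfl; rw [hinv a has] at hfb; exact hfa hfb.symm
        · rintro ⟨⟨hbs, -, -⟩, hfb⟩; exact ⟨hbs, hfb⟩
      rw [hfilter, ← ih t htss f hmap' hinv']
      omega

lemma parity_div (n : ℕ) (hn : 1 ≤ n) :
    Odd ((n.divisors.filter (fun m => Odd m ∧ Odd (n / m))).card)
      ↔ ∃ k, Odd k ∧ n = k ^ 2 := by
  have hn0 : n ≠ 0 := by omega
  set s := n.divisors.filter (fun m => Odd m ∧ Odd (n / m)) with hs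
  have hmap : ∀ a ∈ s, n / a ∈ s := by
    intro a ha
    obtain ⟨hdiv, hoa, hoq⟩ := Finset.mem_filter.mp ha
    obtain ⟨hdvd, -⟩ := Nat.mem_divisors.mp hdiv
    have ha0 : a ≠ 0 := by rintro rfl; exact hn0 (Nat.eq_zero_of_zero_dvd hdvd)
    have hqd : n / a ∣ n := Nat.div_dvd_of_dvd hdvd
    refine Finset.mem_filter.mpr ⟨Nat.mem_divisors.mpr ⟨hqd, hn0⟩, hoq, ?_⟩
    rw [Nat.div_div_self hdvd hn0]
    exact hoa
  have hinv : ∀ a ∈ s, n / (n / a) = a := by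
    intro a ha
    obtain ⟨hdiv, -, -⟩ := Finset.mem_filter.mp ha
    exact Nat.div_div_self (Nat.mem_divisors.mp hdiv).1 hn0
  have hpar : s.card % 2 = (s.filter fun a => n / a = a).card % 2 :=
    invol_parity s (fun a => n / a) hmap hinv
  constructor
  · intro h
    rw [Nat.odd_iff] at h
    rw [h] at hpar
    have hne : (s.filter fun a => n / a = a).Nonempty := by
      rw [← Finset.card_pos]; omega
    obtain ⟨m, hm⟩ := hne
    obtain ⟨hms, hfix⟩ := Finset.mem_filter.mp hm
    obtain ⟨hdiv, hom, -⟩ := Finset.mem_filter.mp hms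
    have hdvd : m ∣ n := (Nat.mem_divisors.mp hdiv).1
    have h1 := Nat.div_mul_cancel hdvd
    rw [hfix] at h1
    exact ⟨m, hom, by rw [pow_two]; exact h1.symm⟩
  · rintro ⟨k, hk, rfl⟩
    have hk0 : k ≠ 0 := by rintro rfl; simp at hn
    have hfix : (s.filter fun a => k ^ 2 / a = a) = {k} := by
      ext m
      simp only [hs, Finset.mem_filter, Finset.mem_singleton, Nat.mem_divisors]
      constructor
      · rintro ⟨⟨⟨hdvd, -⟩, -, -⟩, hfx⟩
        have hm0 : m ≠ 0 := by rintro rfl; exact hn0 (Nat.eq_zero_of_zero_dvd hdvd)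
        have h1 := Nat.div_mul_cancel hdvd
        rw [hfx, pow_two] at h1
        exact Nat.mul_self_inj.mp h1
      · intro he
        rw [he]
        have hq : k ^ 2 / k = k := by
          rw [pow_two, Nat.mul_div_cancel_left _ (Nat.pos_of_ne_zero hk0)]
        exact ⟨⟨⟨⟨k, pow_two k⟩, hn0⟩, hk, by rw [hq]; exact hk⟩, hq⟩
    rw [hfix] at hpar
    simp only [Finset.card_singleton] at hpar
    rw [Nat.odd_iff]
    omega

theorem sptbar1_odd_iff (n : ℕ) (hn : 1 ≤ n) :
    Odd (sptbar1 n) ↔ ∃ k, Odd k ∧ n = k ^ 2 := by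
  rw [← zmod2_cast_eq_one_iff, sptbar1_cast, zmod2_cast_eq_one_iff,
    ← card_eq n hn]
  exact parity_div n hn
end

section
/- For n ≥ 1, the generating function identity ∏_{j≥n+1} (1+q^j) = 1 / ((1-q^{n+1})(1-q^{n+2})···(1-q^{2n}) · ∏_{k≥0} (1-q^{2n+1+2k})) holds as an identity of formal power series in q. -/
open PowerSeries

/-- The infinite product `∏_{j≥0} f j` of power series, where the `j`-th factor is assumed
to be of the form `1 + (terms of order > j)`; under this assumption the coefficient of
`q^d` only involves the factors with index `≤ d`, so the product may be (and is here)
defined coefficientwise by truncation. -/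
noncomputable def pprod (f : ℕ → PowerSeries ℚ) : PowerSeries ℚ :=
  PowerSeries.mk fun d => PowerSeries.coeff d (∏ j ∈ Finset.range (d + 1), f j)

/-!
Multiplying `∏_{j>n} (1+q^j)` by `∏_{j>n} (1-q^j)` gives `∏_{j>n} (1-q^{2j})`, while sorting the
factors of `∏_{j>n} (1-q^j)` by parity of `j` gives
`(1-q^{n+1})⋯(1-q^{2n}) · ∏_{k≥0} (1-q^{2n+1+2k}) · ∏_{j>n} (1-q^{2j})`; cancelling
`∏_{j>n} (1-q^{2j})` leaves the identity. On truncations this is an exact polynomial identity,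
and modulo `q^N` every factor beyond the truncation is `1`.
-/

open Finset

section CommRing

variable {R : Type*} [CommRing R]

theorem prod_range_sModEq_of_forall_Ico {I : Ideal R} {f : ℕ → R} {N M : ℕ} (hNM : N ≤ M)
    (hf : ∀ j ∈ Ico N M, f j ≡ 1 [SMOD I]) :
    ∏ j ∈ range M, f j ≡ ∏ j ∈ range N, f j [SMOD I] := by
  rw [← prod_range_mul_prod_Ico f hNM]
  simpa only [prod_const_one, mul_one] using SModEq.rfl.mul (SModEq.prod hf)

/-- The even factors `∏_{j<m} (1 - x^{2(n+1+j)})` are kept on the left so that no cancellation is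
needed and the identity holds in every commutative ring. -/
theorem prod_one_add_pow_mul_prod_one_sub_pow (x : R) (n m : ℕ) :
    (∏ j ∈ range (n + 2 * m), (1 + x ^ (n + 1 + j))) *
        ((∏ j ∈ Icc (n + 1) (2 * n), (1 - x ^ j)) *
          ∏ k ∈ range m, (1 - x ^ (2 * n + 1 + 2 * k))) *
        ∏ j ∈ range m, (1 - x ^ (2 * (n + 1 + j))) =
      ∏ j ∈ range (n + 2 * m), (1 - x ^ (2 * (n + 1 + j))) := by
  induction m with
  | zero =>
    rw [← Ico_add_one_right_eq_Icc, prod_Ico_eq_prod_range, show 2 * n + 1 - (n + 1) = n by omega]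
    simp only [mul_zero, add_zero, range_zero, prod_empty, mul_one, ← prod_mul_distrib]
    exact prod_congr rfl fun j _ => by ring
  | succ m ih =>
    rw [show n + 2 * (m + 1) = n + 2 * m + 1 + 1 by ring]
    simp only [prod_range_succ]
    linear_combination (1 + x ^ (n + 1 + (n + 2 * m))) * (1 + x ^ (n + 1 + (n + 2 * m + 1))) *
      (1 - x ^ (2 * n + 1 + 2 * m)) * (1 - x ^ (2 * (n + 1 + m))) * ih

namespace PowerSeries

theorem sModEq_X_pow_iff {N : ℕ} {f g : R⟦X⟧} :
    f ≡ g [SMOD Ideal.span {(X : R⟦X⟧) ^ N}] ↔ ∀ i < N, coeff i f = coeff i g := by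
  simp only [SModEq.sub_mem, Ideal.mem_span_singleton, X_pow_dvd_iff, map_sub, sub_eq_zero]

theorem sModEq_X_pow_of_le {N k : ℕ} {f g : R⟦X⟧} (h : N ≤ k)
    (hfg : f ≡ g [SMOD Ideal.span {(X : R⟦X⟧) ^ k}]) :
    f ≡ g [SMOD Ideal.span {(X : R⟦X⟧) ^ N}] :=
  hfg.mono (Ideal.span_singleton_le_span_singleton.2 (pow_dvd_pow X h))

theorem one_add_X_pow_sModEq_one {N k : ℕ} (h : N ≤ k) :
    (1 : R⟦X⟧) + X ^ k ≡ 1 [SMOD Ideal.span {(X : R⟦X⟧) ^ N}] :=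
  SModEq.sub_mem.2 (Ideal.mem_span_singleton.2 (by simpa using pow_dvd_pow X h))

theorem one_sub_X_pow_sModEq_one {N k : ℕ} (h : N ≤ k) :
    (1 : R⟦X⟧) - X ^ k ≡ 1 [SMOD Ideal.span {(X : R⟦X⟧) ^ N}] :=
  SModEq.sub_mem.2 (Ideal.mem_span_singleton.2 (by simpa using pow_dvd_pow X h))

theorem prod_one_add_X_pow_mul_prod_one_sub_X_pow (n m : ℕ) :
    (∏ j ∈ range (n + 2 * m), (1 + X ^ (n + 1 + j))) *
        ((∏ j ∈ Icc (n + 1) (2 * n), (1 - X ^ j)) *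
          ∏ k ∈ range m, (1 - X ^ (2 * n + 1 + 2 * k))) =
      ∏ j ∈ Ico m (n + 2 * m), (1 - (X : R⟦X⟧) ^ (2 * (n + 1 + j))) := by
  have hunit : IsUnit (∏ j ∈ range m, (1 - (X : R⟦X⟧) ^ (2 * (n + 1 + j)))) := by
    simp [isUnit_iff_constantCoeff]
  refine hunit.mul_right_cancel ?_
  rw [prod_one_add_pow_mul_prod_one_sub_pow, ← prod_range_mul_prod_Ico _ (by omega : m ≤ n + 2 * m),
    mul_comm]

end PowerSeries

end CommRing

theorem pprod_sModEq_prod_range {f : ℕ → ℚ⟦X⟧}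
    (hf : ∀ j, f j ≡ 1 [SMOD Ideal.span {(X : ℚ⟦X⟧) ^ (j + 1)}]) {N M : ℕ} (hNM : N ≤ M) :
    pprod f ≡ ∏ j ∈ range M, f j [SMOD Ideal.span {(X : ℚ⟦X⟧) ^ N}] := by
  refine sModEq_X_pow_iff.2 fun i hi => ?_
  have hstable : ∏ j ∈ range M, f j ≡ ∏ j ∈ range (i + 1), f j
      [SMOD Ideal.span {(X : ℚ⟦X⟧) ^ (i + 1)}] :=
    prod_range_sModEq_of_forall_Ico (by omega) fun j hj =>
      sModEq_X_pow_of_le (by rw [mem_Ico] at hj; omega) (hf j)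
  rw [pprod, coeff_mk]
  exact (sModEq_X_pow_iff.1 hstable i (lt_add_one i)).symm

theorem pprod_one_add_X_pow_mul_eq_one (n : ℕ) :
    pprod (fun j => 1 + X ^ (n + 1 + j)) *
      ((∏ j ∈ Icc (n + 1) (2 * n), (1 - X ^ j)) *
        pprod (fun k => 1 - X ^ (2 * n + 1 + 2 * k))) = 1 := by
  ext d
  set N := d + 1
  set I := Ideal.span {(X : ℚ⟦X⟧) ^ N}
  have hA : pprod (fun j => 1 + X ^ (n + 1 + j)) ≡
      ∏ j ∈ range (n + 2 * N), (1 + X ^ (n + 1 + j)) [SMOD I] :=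
    pprod_sModEq_prod_range (fun j => one_add_X_pow_sModEq_one (by omega)) (by omega)
  have hC : pprod (fun k => 1 - X ^ (2 * n + 1 + 2 * k)) ≡
      ∏ k ∈ range N, (1 - X ^ (2 * n + 1 + 2 * k)) [SMOD I] :=
    pprod_sModEq_prod_range (fun k => one_sub_X_pow_sModEq_one (by omega)) le_rfl
  have hR : ∏ j ∈ Ico N (n + 2 * N), (1 - X ^ (2 * (n + 1 + j))) ≡ 1 [SMOD I] :=
    calc _ ≡ ∏ j ∈ Ico N (n + 2 * N), (1 : ℚ⟦X⟧) [SMOD I] :=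
          SModEq.prod fun j hj => one_sub_X_pow_sModEq_one (by rw [mem_Ico] at hj; omega)
      _ = 1 := prod_const_one
  refine sModEq_X_pow_iff.1 ?_ d (lt_add_one d)
  calc _ ≡ _ [SMOD I] := hA.mul (SModEq.rfl.mul hC)
    _ = _ := prod_one_add_X_pow_mul_prod_one_sub_X_pow n N
    _ ≡ 1 [SMOD I] := hR

theorem euler_extension_gen_fun_general (n : ℕ) :
    pprod (fun j => 1 + (X : PowerSeries ℚ) ^ (n + 1 + j)) =
      ((∏ j ∈ Finset.Icc (n + 1) (2 * n), (1 - (X : PowerSeries ℚ) ^ j)) *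
        pprod (fun k => 1 - (X : PowerSeries ℚ) ^ (2 * n + 1 + 2 * k)))⁻¹ := by
  have h := pprod_one_add_X_pow_mul_eq_one n
  have hcoeff := congrArg constantCoeff h
  rw [map_mul, map_one] at hcoeff
  exact (eq_inv_iff_mul_eq_one (right_ne_zero_of_mul_eq_one hcoeff)).2 h

/-- For `n ≥ 1`,
`∏_{j≥n+1} (1+q^j) = 1/((1-q^{n+1})⋯(1-q^{2n}) · ∏_{k≥0} (1-q^{2n+1+2k}))`
as formal power series in `q`. -/
theorem euler_extension_gen_fun (n : ℕ) (hn : 1 ≤ n) :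
    pprod (fun j => 1 + (X : PowerSeries ℚ) ^ (n + 1 + j)) =
      ((∏ j ∈ Finset.Icc (n + 1) (2 * n), (1 - (X : PowerSeries ℚ) ^ j)) *
        pprod (fun k => 1 - (X : PowerSeries ℚ) ^ (2 * n + 1 + 2 * k)))⁻¹ :=
  euler_extension_gen_fun_general n
end

section
/- sptbar(n) equals the number of pairs of partitions (λ₁, λ₂) with |λ₁| + |λ₂| = n, λ₁ nonempty, s(λ₁) ≤ s(λ₂) (where s denotes the smallest part, with s of the empty partition = ∞), and all parts of λ₂ that are ≥ 2·s(λ₁)+1 are odd. -/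
open scoped Classical

/-!
An overpartition of `n` whose smallest part `s` is not overlined, together with one marked copy
of `s`, is encoded as `(M, S, j)`: the parts `M`, the set `S` of overlined parts (all `> s`) and
the index `j < m` of the marked copy among the `m` copies of `s`. It corresponds to the pair
`λ₁ = s^(j+1) ∪ (M ∖ (s^m ∪ S))`, `λ₂ = s^(m-j-1) ∪ split S`, where a Glaisher-type map splits
each `k ∈ S` into `2^e` copies of the number `u` obtained by halving `k` while it is even and
exceeds `2s`. This map is a bijection from finite sets of integers `> s` onto multisets of
integers `> s` whose parts above `2s` are odd: the inverse turns the `c` copies of `u` into the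
distinct parts `2^e * u`, `e` running over the binary digits of `c`.
-/

namespace Multiset

variable {α : Type*}

theorem forall_mem_replicate_add {p : α → Prop} {c : ℕ} {s : α} {R : Multiset α} :
    (∀ a ∈ replicate c s + R, p a) ↔ (c ≠ 0 → p s) ∧ ∀ a ∈ R, p a := by
  simp only [mem_add, mem_replicate, or_imp, forall_and, and_imp, forall_eq_apply_imp_iff]

theorem mem_replicate_add_self {c : ℕ} (hc : c ≠ 0) (s : α) (R : Multiset α) :
    s ∈ replicate c s + R :=
  mem_add.mpr (.inl (mem_replicate.mpr ⟨hc, rfl⟩))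

variable [DecidableEq α]

theorem replicate_count_add_filter_ne (M : Multiset α) (s : α) :
    replicate (M.count s) s + M.filter (· ≠ s) = M := by
  rw [← filter_eq', filter_add_not]

theorem count_replicate_add {R : Multiset α} {s : α} (hs : s ∉ R) (c : ℕ) :
    (replicate c s + R).count s = c := by
  simp [count_eq_zero.mpr hs]

theorem filter_ne_replicate_add {R : Multiset α} {s : α} (hs : s ∉ R) (c : ℕ) :
    (replicate c s + R).filter (· ≠ s) = R := by
  rw [filter_add, filter_eq_nil.mpr fun a ha => not_not.mpr (eq_of_mem_replicate ha), zero_add,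
    filter_eq_self]
  rintro a ha rfl
  exact hs ha

theorem sum_eq_count_mul_add (M : Multiset ℕ) (s : ℕ) :
    M.sum = M.count s * s + (M.filter (· ≠ s)).sum := by
  conv_lhs => rw [← replicate_count_add_filter_ne M s]
  rw [sum_add, sum_replicate, smul_eq_mul]

end Multiset

noncomputable def smin (M : Multiset ℕ) : ℕ := sInf {a | a ∈ M}

theorem smin_mem {M : Multiset ℕ} (h : M ≠ 0) : smin M ∈ M :=
  Nat.sInf_mem (Multiset.exists_mem_of_ne_zero h)

theorem smin_le {M : Multiset ℕ} {a : ℕ} (ha : a ∈ M) : smin M ≤ a := Nat.sInf_le ha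

theorem smin_eq {M : Multiset ℕ} {s : ℕ} (hs : s ∈ M) (h : ∀ a ∈ M, s ≤ a) : smin M = s :=
  (smin_le hs).antisymm (h _ (smin_mem (by rintro rfl; simp at hs)))

theorem smin_replicate_add {R : Multiset ℕ} {s c : ℕ} (hc : c ≠ 0) (hR : ∀ a ∈ R, s < a) :
    smin (Multiset.replicate c s + R) = s :=
  smin_eq (Multiset.mem_replicate_add_self hc s R)
    (Multiset.forall_mem_replicate_add.mpr ⟨fun _ => le_rfl, fun a ha => (hR a ha).le⟩)

theorem lt_of_mem_filter_ne_smin {M : Multiset ℕ} {a : ℕ} (ha : a ∈ M.filter (· ≠ smin M)) :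
    smin M < a :=
  (smin_le (Multiset.mem_of_mem_filter ha)).lt_of_ne' (Multiset.mem_filter.mp ha).2

theorem numSmallest_eq_count_smin {M : Multiset ℕ} (h : M ≠ 0) :
    numSmallest M = M.count (smin M) := by
  rw [numSmallest, ← Multiset.card_replicate (M.count (smin M)) (smin M), ← Multiset.filter_eq']
  congr 1
  refine Multiset.filter_congr fun a ha => ⟨fun hmin => ?_, ?_⟩
  · exact (hmin _ (smin_mem h)).antisymm (smin_le ha)
  · rintro rfl b hb
    exact smin_le hb

namespace Glaisher

def core (s k : ℕ) : ℕ :=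
  if 2 * s < k ∧ 2 ∣ k then core s (k / 2) else k
termination_by k
decreasing_by omega

def exponent (s k : ℕ) : ℕ :=
  if 2 * s < k ∧ 2 ∣ k then exponent s (k / 2) + 1 else 0
termination_by k
decreasing_by omega

def Reduced (s u : ℕ) : Prop := s < u ∧ (2 * s < u → Odd u)

theorem two_pow_exponent_mul_core (s k : ℕ) : 2 ^ exponent s k * core s k = k := by
  induction k using Nat.strong_induction_on with
  | _ k ih =>
    rw [core, exponent]
    split_ifs with h
    · rw [pow_succ, mul_comm _ 2, mul_assoc, ih _ (by omega)]
      exact Nat.mul_div_cancel' h.2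
    · simp

theorem reduced_core {s k : ℕ} (h : s < k) : Reduced s (core s k) := by
  induction k using Nat.strong_induction_on with
  | _ k ih =>
    rw [core]
    split_ifs with hk
    · exact ih _ (by omega) (by omega)
    · refine ⟨h, fun hsk => Nat.odd_iff.mpr ?_⟩
      omega

theorem core_of_reduced {s u : ℕ} (hu : Reduced s u) : core s u = u := by
  rw [core, if_neg]
  rintro ⟨hsu, hdvd⟩
  exact Nat.not_even_iff_odd.mpr (hu.2 hsu) (even_iff_two_dvd.mpr hdvd)

theorem exponent_of_reduced {s u : ℕ} (hu : Reduced s u) : exponent s u = 0 := by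
  rw [exponent, if_neg]
  rintro ⟨hsu, hdvd⟩
  exact Nat.not_even_iff_odd.mpr (hu.2 hsu) (even_iff_two_dvd.mpr hdvd)

theorem core_two_mul {s k : ℕ} (h : s < k) : core s (2 * k) = core s k := by
  rw [core, if_pos ⟨by omega, dvd_mul_right 2 k⟩, Nat.mul_div_cancel_left k two_pos]

theorem exponent_two_mul {s k : ℕ} (h : s < k) : exponent s (2 * k) = exponent s k + 1 := by
  rw [exponent, if_pos ⟨by omega, dvd_mul_right 2 k⟩, Nat.mul_div_cancel_left k two_pos]

theorem lt_two_pow_mul {s u : ℕ} (h : s < u) (e : ℕ) : s < 2 ^ e * u :=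
  h.trans_le (Nat.le_mul_of_pos_left u (Nat.two_pow_pos e))

theorem core_two_pow_mul {s u : ℕ} (hu : Reduced s u) (e : ℕ) : core s (2 ^ e * u) = u := by
  induction e with
  | zero => simpa using core_of_reduced hu
  | succ e ih => rw [pow_succ', mul_assoc, core_two_mul (lt_two_pow_mul hu.1 e), ih]

theorem exponent_two_pow_mul {s u : ℕ} (hu : Reduced s u) (e : ℕ) :
    exponent s (2 ^ e * u) = e := by
  induction e with
  | zero => simpa using exponent_of_reduced hu
  | succ e ih => rw [pow_succ', mul_assoc, exponent_two_mul (lt_two_pow_mul hu.1 e), ih]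

def split (s : ℕ) (D : Finset ℕ) : Multiset ℕ :=
  D.val.bind fun k => Multiset.replicate (2 ^ exponent s k) (core s k)

noncomputable def merge (X : Multiset ℕ) : Finset ℕ :=
  X.toFinset.biUnion fun u => (X.count u).bitIndices.toFinset.image (2 ^ · * u)

theorem sum_split (s : ℕ) (D : Finset ℕ) : (split s D).sum = D.val.sum := by
  simp only [split, Multiset.sum_bind, Multiset.sum_replicate, smul_eq_mul,
    two_pow_exponent_mul_core, Multiset.map_id']

theorem mem_split {s a : ℕ} {D : Finset ℕ} : a ∈ split s D ↔ ∃ k ∈ D, core s k = a := by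
  simp [split, Multiset.mem_replicate, eq_comm]

theorem count_split (s u : ℕ) (D : Finset ℕ) :
    (split s D).count u = ∑ k ∈ D with core s k = u, 2 ^ exponent s k := by
  simp [split, Multiset.count_bind, Multiset.count_replicate, Finset.sum_filter]

theorem mem_merge {X : Multiset ℕ} {a : ℕ} :
    a ∈ merge X ↔ ∃ u ∈ X, ∃ e ∈ (X.count u).bitIndices, 2 ^ e * u = a := by
  simp [merge]

theorem merge_split (s : ℕ) (D : Finset ℕ) : merge (split s D) = D := by
  have bits : ∀ u, ((split s D).count u).bitIndices.toFinset =
      {k ∈ D | core s k = u}.image (exponent s) := by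
    intro u
    rw [count_split, ← Finset.sum_image, Finset.toFinset_bitIndices_sum_two_pow]
    intro k hk k' hk' he
    rw [← two_pow_exponent_mul_core s k, ← two_pow_exponent_mul_core s k', he,
      (Finset.mem_filter.mp hk).2, (Finset.mem_filter.mp hk').2]
  ext a
  simp only [merge, Finset.mem_biUnion, Multiset.mem_toFinset, bits, Finset.mem_image,
    Finset.mem_filter, mem_split]
  constructor
  · rintro ⟨u, -, e, ⟨k, ⟨hk, rfl⟩, rfl⟩, rfl⟩
    rwa [two_pow_exponent_mul_core]
  · intro ha
    exact ⟨core s a, ⟨a, ha, rfl⟩, exponent s a, ⟨a, ⟨ha, rfl⟩, rfl⟩,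
      two_pow_exponent_mul_core s a⟩

theorem filter_core_merge {s : ℕ} {X : Multiset ℕ} (hX : ∀ u ∈ X, Reduced s u) (u : ℕ) :
    {k ∈ merge X | core s k = u} = (X.count u).bitIndices.toFinset.image (2 ^ · * u) := by
  ext k
  simp only [Finset.mem_filter, mem_merge, Finset.mem_image, List.mem_toFinset]
  constructor
  · rintro ⟨⟨v, hv, e, he, rfl⟩, rfl⟩
    rw [core_two_pow_mul (hX v hv)]
    exact ⟨e, he, rfl⟩
  · rintro ⟨e, he, rfl⟩
    have hu : u ∈ X := Multiset.count_ne_zero.mp (by rintro h; simp [h] at he)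
    exact ⟨⟨u, hu, e, he, rfl⟩, core_two_pow_mul (hX u hu) e⟩

theorem split_merge {s : ℕ} {X : Multiset ℕ} (hX : ∀ u ∈ X, Reduced s u) :
    split s (merge X) = X := by
  ext u
  rw [count_split, filter_core_merge hX]
  by_cases hu : u ∈ X
  · have hpos : 0 < u := (Nat.zero_le s).trans_lt (hX u hu).1
    rw [Finset.sum_image fun e _ e' _ h =>
        Nat.pow_right_injective le_rfl (Nat.eq_of_mul_eq_mul_right hpos h),
      Finset.sum_congr rfl fun e _ => by rw [exponent_two_pow_mul (hX u hu)],
      Finset.sum_toFinset_bitIndices_two_pow]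
  · simp [Multiset.count_eq_zero.mpr hu]

theorem reduced_of_mem_split {s a : ℕ} {D : Finset ℕ} (hD : ∀ k ∈ D, s < k)
    (ha : a ∈ split s D) : Reduced s a := by
  obtain ⟨k, hk, rfl⟩ := mem_split.mp ha
  exact reduced_core (hD k hk)

theorem lt_of_mem_merge {s a : ℕ} {X : Multiset ℕ} (hX : ∀ u ∈ X, s < u)
    (ha : a ∈ merge X) : s < a := by
  obtain ⟨u, hu, e, -, rfl⟩ := mem_merge.mp ha
  exact lt_two_pow_mul (hX u hu) e

end Glaisher

namespace Sptbar

open Multiset Glaisher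

variable {n : ℕ}

def IsMarkedOverpartition (n : ℕ) (q : Multiset ℕ × Finset ℕ × ℕ) : Prop :=
  (∀ a ∈ q.1, 0 < a) ∧ q.1.sum = n ∧ q.2.1 ⊆ q.1.toFinset ∧
    (∀ a ∈ q.2.1, ∃ b ∈ q.1, b < a) ∧ q.2.2 < numSmallest q.1

def IsSptbarPair (n : ℕ) (P : Multiset ℕ × Multiset ℕ) : Prop :=
  (∀ a ∈ P.1, 0 < a) ∧ (∀ a ∈ P.2, 0 < a) ∧ P.1 ≠ 0 ∧ P.1.sum + P.2.sum = n ∧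
    ∃ s ∈ P.1, (∀ a ∈ P.1, s ≤ a) ∧ (∀ b ∈ P.2, s ≤ b) ∧ (∀ b ∈ P.2, 2 * s + 1 ≤ b → Odd b)

noncomputable def toPair (q : Multiset ℕ × Finset ℕ × ℕ) : Multiset ℕ × Multiset ℕ :=
  let s := smin q.1
  (replicate (q.2.2 + 1) s + (q.1.filter (· ≠ s) - q.2.1.val),
    replicate (q.1.count s - (q.2.2 + 1)) s + split s q.2.1)

noncomputable def ofPair (P : Multiset ℕ × Multiset ℕ) : Multiset ℕ × Finset ℕ × ℕ :=
  let s := smin P.1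
  let S := merge (P.2.filter (· ≠ s))
  (replicate (P.1.count s + P.2.count s) s + (P.1.filter (· ≠ s) + S.val), S, P.1.count s - 1)

section Marked

variable {M : Multiset ℕ} {S : Finset ℕ} {j : ℕ}

theorem IsMarkedOverpartition.ne_zero (h : IsMarkedOverpartition n (M, S, j)) : M ≠ 0 := by
  rintro rfl
  simp [numSmallest, IsMarkedOverpartition] at h

theorem IsMarkedOverpartition.smin_pos (h : IsMarkedOverpartition n (M, S, j)) : 0 < smin M :=
  h.1 _ (smin_mem h.ne_zero)

theorem IsMarkedOverpartition.lt_count_smin (h : IsMarkedOverpartition n (M, S, j)) :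
    j < M.count (smin M) :=
  numSmallest_eq_count_smin h.ne_zero ▸ h.2.2.2.2

theorem IsMarkedOverpartition.smin_lt (h : IsMarkedOverpartition n (M, S, j)) {a : ℕ}
    (ha : a ∈ S) : smin M < a := by
  obtain ⟨b, hb, hba⟩ := h.2.2.2.1 a ha
  exact (smin_le hb).trans_lt hba

theorem IsMarkedOverpartition.val_le_filter (h : IsMarkedOverpartition n (M, S, j)) :
    S.val ≤ M.filter (· ≠ smin M) := by
  rw [le_iff_subset S.nodup]
  intro a ha
  exact mem_filter.mpr ⟨mem_toFinset.mp (h.2.2.1 ha), (h.smin_lt ha).ne'⟩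

end Marked

section Pair

variable {L₁ L₂ : Multiset ℕ}

theorem IsSptbarPair.reduced (h : IsSptbarPair n (L₁, L₂)) {u : ℕ}
    (hu : u ∈ L₂.filter (· ≠ smin L₁)) : Reduced (smin L₁) u := by
  obtain ⟨s, hs, hs₁, hs₂, hodd⟩ := h.2.2.2.2
  rw [smin_eq hs hs₁] at hu ⊢
  obtain ⟨hu₂, hus⟩ := mem_filter.mp hu
  exact ⟨(hs₂ u hu₂).lt_of_ne' hus, hodd u hu₂⟩

theorem IsSptbarPair.count_smin_pos (h : IsSptbarPair n (L₁, L₂)) : 0 < L₁.count (smin L₁) :=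
  count_pos.mpr (smin_mem h.2.2.1)

theorem IsSptbarPair.smin_lt (h : IsSptbarPair n (L₁, L₂)) {a : ℕ}
    (ha : a ∈ L₁.filter (· ≠ smin L₁) + (merge (L₂.filter (· ≠ smin L₁))).val) :
    smin L₁ < a := by
  rcases mem_add.mp ha with ha | ha
  exacts [lt_of_mem_filter_ne_smin ha, lt_of_mem_merge (fun u hu => (h.reduced hu).1) ha]

end Pair

theorem isSptbarPair_toPair {q : Multiset ℕ × Finset ℕ × ℕ} (h : IsMarkedOverpartition n q) :
    IsSptbarPair n (toPair q) := by
  obtain ⟨M, S, j⟩ := q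
  have hs : 0 < smin M := h.smin_pos
  have hR : ∀ a ∈ M.filter (· ≠ smin M) - S.val, smin M < a :=
    fun a ha => lt_of_mem_filter_ne_smin (mem_of_le tsub_le_self ha)
  have hS : ∀ b ∈ split (smin M) S, Reduced (smin M) b :=
    fun b hb => reduced_of_mem_split (fun k => h.smin_lt) hb
  have hs₁ := mem_replicate_add_self j.succ_ne_zero (smin M) (M.filter (· ≠ smin M) - S.val)
  refine ⟨?_, ?_, ne_of_mem_of_not_mem' hs₁ (notMem_zero _), ?_, smin M, hs₁, ?_, ?_, ?_⟩ <;>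
    simp only [toPair, forall_mem_replicate_add]
  · exact ⟨fun _ => hs, fun a ha => hs.trans (hR a ha)⟩
  · exact ⟨fun _ => hs, fun a ha => hs.trans (hS a ha).1⟩
  · have hRS := congrArg sum (tsub_add_cancel_of_le h.val_le_filter)
    have hc : (j + 1) * smin M + (M.count (smin M) - (j + 1)) * smin M =
        M.count (smin M) * smin M := by
      rw [← add_mul, Nat.add_sub_cancel' h.lt_count_smin]
    have hM : M.sum = n := h.2.1
    rw [sum_add] at hRS
    rw [M.sum_eq_count_mul_add (smin M)] at hM
    simp only [sum_add, sum_replicate, smul_eq_mul, sum_split]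
    omega
  · exact ⟨fun _ => le_rfl, fun a ha => (hR a ha).le⟩
  · exact ⟨fun _ => le_rfl, fun a ha => (hS a ha).1.le⟩
  · exact ⟨fun _ h => by omega, fun a ha h => (hS a ha).2 h⟩

theorem isMarkedOverpartition_ofPair {P : Multiset ℕ × Multiset ℕ} (h : IsSptbarPair n P) :
    IsMarkedOverpartition n (ofPair P) := by
  obtain ⟨L₁, L₂⟩ := P
  have hL₁ : smin L₁ ∈ L₁ := smin_mem h.2.2.1
  have hs : 0 < smin L₁ := h.1 _ hL₁
  have hX : ∀ u ∈ L₂.filter (· ≠ smin L₁), Reduced (smin L₁) u := fun u => h.reduced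
  have hR : ∀ a ∈ L₁.filter (· ≠ smin L₁) + (merge (L₂.filter (· ≠ smin L₁))).val,
      smin L₁ < a := fun a => h.smin_lt
  have hc := h.count_smin_pos
  have hs₁ := mem_replicate_add_self (c := L₁.count (smin L₁) + L₂.count (smin L₁)) (by omega)
    (smin L₁) (L₁.filter (· ≠ smin L₁) + (merge (L₂.filter (· ≠ smin L₁))).val)
  refine ⟨?_, ?_, ?_, ?_, ?_⟩ <;> simp only [ofPair]
  · rw [forall_mem_replicate_add]
    exact ⟨fun _ => hs, fun a ha => hs.trans (hR a ha)⟩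
  · have hS := sum_split (smin L₁) (merge (L₂.filter (· ≠ smin L₁)))
    rw [split_merge hX] at hS
    have hL : L₁.sum + L₂.sum = n := h.2.2.2.1
    rw [L₁.sum_eq_count_mul_add (smin L₁), L₂.sum_eq_count_mul_add (smin L₁)] at hL
    simp only [sum_add, sum_replicate, smul_eq_mul, add_mul]
    omega
  · intro a ha
    simp [ha]
  · exact fun a ha => ⟨smin L₁, hs₁, hR a (mem_add.mpr (.inr ha))⟩
  · rw [numSmallest_eq_count_smin (ne_of_mem_of_not_mem' hs₁ (notMem_zero _)),
      smin_replicate_add (by omega) hR, count_replicate_add (fun h => (hR _ h).false)]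
    omega

theorem ofPair_toPair {q : Multiset ℕ × Finset ℕ × ℕ} (h : IsMarkedOverpartition n q) :
    ofPair (toPair q) = q := by
  obtain ⟨M, S, j⟩ := q
  have hR : ∀ a ∈ M.filter (· ≠ smin M) - S.val, smin M < a :=
    fun a ha => lt_of_mem_filter_ne_smin (mem_of_le tsub_le_self ha)
  have hS : ∀ b ∈ split (smin M) S, smin M < b :=
    fun b hb => (reduced_of_mem_split (fun k => h.smin_lt) hb).1
  simp only [toPair, ofPair, smin_replicate_add j.succ_ne_zero hR,
    count_replicate_add (fun h => (hR _ h).false), count_replicate_add (fun h => (hS _ h).false),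
    filter_ne_replicate_add (fun h => (hR _ h).false),
    filter_ne_replicate_add (fun h => (hS _ h).false), merge_split,
    Nat.add_sub_cancel' h.lt_count_smin, tsub_add_cancel_of_le h.val_le_filter,
    replicate_count_add_filter_ne, Nat.add_sub_cancel]

theorem toPair_ofPair {P : Multiset ℕ × Multiset ℕ} (h : IsSptbarPair n P) :
    toPair (ofPair P) = P := by
  obtain ⟨L₁, L₂⟩ := P
  have hX : ∀ u ∈ L₂.filter (· ≠ smin L₁), Reduced (smin L₁) u := fun u => h.reduced
  have hR : ∀ a ∈ L₁.filter (· ≠ smin L₁) + (merge (L₂.filter (· ≠ smin L₁))).val,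
      smin L₁ < a := fun a => h.smin_lt
  have hc := h.count_smin_pos
  have hsmin := smin_replicate_add (c := L₁.count (smin L₁) + L₂.count (smin L₁)) (by omega) hR
  simp only [toPair, ofPair, hsmin, count_replicate_add (fun h => (hR _ h).false),
    filter_ne_replicate_add (fun h => (hR _ h).false), add_tsub_cancel_right, split_merge hX,
    Nat.sub_add_cancel hc, add_tsub_cancel_left, replicate_count_add_filter_ne]

noncomputable def markedEquivSptbarPair (n : ℕ) :
    {q // IsMarkedOverpartition n q} ≃ {P // IsSptbarPair n P} where
  toFun q := ⟨toPair q, isSptbarPair_toPair q.2⟩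
  invFun P := ⟨ofPair P, isMarkedOverpartition_ofPair P.2⟩
  left_inv q := Subtype.ext (ofPair_toPair q.2)
  right_inv P := Subtype.ext (toPair_ofPair P.2)

def sigmaEquivMarked (n : ℕ) :
    (Σ p : Nat.Partition n, {S // S ∈ p.parts.toFinset.powerset.filter
        fun S => ∀ a ∈ S, ∃ b ∈ p.parts, b < a} × Fin (numSmallest p.parts)) ≃
      {q // IsMarkedOverpartition n q} where
  toFun x := ⟨(x.1.parts, x.2.1.1, x.2.2), fun _ => x.1.parts_pos, x.1.parts_sum,
    Finset.mem_powerset.mp (Finset.mem_filter.mp x.2.1.2).1, (Finset.mem_filter.mp x.2.1.2).2,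
    x.2.2.2⟩
  invFun q := ⟨⟨q.1.1, q.2.1 _, q.2.2.1⟩,
    ⟨q.1.2.1, Finset.mem_filter.mpr ⟨Finset.mem_powerset.mpr q.2.2.2.1, q.2.2.2.2.1⟩⟩,
    ⟨q.1.2.2, q.2.2.2.2.2⟩⟩
  left_inv _ := rfl
  right_inv _ := rfl

end Sptbar

open Sptbar

theorem sptbar_eq_card_marked (n : ℕ) : sptbar n = Nat.card {q // IsMarkedOverpartition n q} := by
  rw [← Nat.card_congr (sigmaEquivMarked n), Nat.card_eq_fintype_card, Fintype.card_sigma, sptbar]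
  refine Finset.sum_congr rfl fun p _ => ?_
  rw [Fintype.card_prod, Fintype.card_coe, Fintype.card_fin, ← Finset.sum_filter,
    Finset.sum_const, smul_eq_mul]

/-- `sptbar n` equals the number of pairs of partitions `(λ₁, λ₂)` (encoded as multisets of
positive integers) with `|λ₁| + |λ₂| = n`, `λ₁` nonempty, `s(λ₁) ≤ s(λ₂)` (vacuous if `λ₂`
is empty, i.e. `s(∅) = ∞`), and every part of `λ₂` that is `≥ 2·s(λ₁)+1` odd.  Here
`s` is the smallest part, introduced below as the element `s ∈ λ₁` below all of `λ₁`. -/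
theorem sptbar_eq_card_partition_pairs (n : ℕ) :
    sptbar n = Nat.card {P : Multiset ℕ × Multiset ℕ //
      (∀ a ∈ P.1, 0 < a) ∧ (∀ a ∈ P.2, 0 < a) ∧ P.1 ≠ 0 ∧
      P.1.sum + P.2.sum = n ∧
      ∃ s ∈ P.1, (∀ a ∈ P.1, s ≤ a) ∧ (∀ b ∈ P.2, s ≤ b) ∧
        (∀ b ∈ P.2, 2 * s + 1 ≤ b → Odd b)} :=
  (sptbar_eq_card_marked n).trans (Nat.card_congr (markedEquivSptbarPair n))
end

section
/- For each n ≥ 1 there is a weight-preserving bijection Ψ_n from the set of partitions into distinct parts ≥ n+1 to the set of partitions into parts ≥ n+1 with all parts > 2n odd, given by sending each part m = b·2^j (b odd) to 2^{j−j₀} copies of b·2^{j₀}, where j₀ = j₀(m,n) is the smallest nonnegative integer with b·2^{j₀} ≥ n+1. -/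
/-- The odd part of a positive integer `m = b(m)·2^{j(m)}` with `b(m)` odd. -/
def oddPart (m : ℕ) : ℕ := m / 2 ^ (m.factorization 2)

/-- `j0 n m` : the smallest nonnegative integer `j₀` with `b(m)·2^{j₀} ≥ n+1`. -/
noncomputable def j0 (n m : ℕ) : ℕ := sInf {j : ℕ | n + 1 ≤ oddPart m * 2 ^ j}

/-- The image of the part `m = b·2^j` under Glaisher-type map:
`2^{j−j₀}` copies of `b·2^{j₀}`. -/
noncomputable def psiPart (n m : ℕ) : Multiset ℕ :=
  Multiset.replicate (2 ^ (m.factorization 2 - j0 n m)) (oddPart m * 2 ^ (j0 n m))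

/-- The map `Ψ_n`, applied to a partition (multiset of parts) by replacing each part
independently. -/
noncomputable def Psi (n : ℕ) (M : Multiset ℕ) : Multiset ℕ := M.bind (psiPart n)

/-- `D_n` : partitions into distinct parts, all `≥ n+1`. -/
def Dn (n : ℕ) : Set (Multiset ℕ) := {M | M.Nodup ∧ ∀ a ∈ M, n + 1 ≤ a}

/-- `P_n` : partitions into parts `≥ n+1` in which every part `> 2n` is odd. -/
def Pn (n : ℕ) : Set (Multiset ℕ) :=
  {M | (∀ a ∈ M, n + 1 ≤ a) ∧ ∀ a ∈ M, 2 * n < a → Odd a}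

/-!
Every part `m ≥ n + 1` factors uniquely as `m = c · 2^e` with `c` an *allowed* part (at least
`n + 1`, and odd if it exceeds `2n`), and `Ψ_n` replaces `m` by `2^e` copies of `c`. Applied to a
set of distinct parts, the multiplicity of `c` in the image is therefore `∑ 2^e` over the exponents
`e` with `c · 2^e` a part, so binary expansion recovers those exponents: this gives injectivity,
and splitting each multiplicity into its binary digits gives the inverse.
-/

open Finset

lemma oddPart_mul_two_pow_factorization (m : ℕ) : oddPart m * 2 ^ m.factorization 2 = m := by
  rw [oddPart, mul_comm]
  exact Nat.ordProj_mul_ordCompl_eq_self m 2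

lemma odd_oddPart {m : ℕ} (hm : m ≠ 0) : Odd (oddPart m) :=
  Nat.odd_iff.mpr (Nat.two_dvd_ne_zero.mp (Nat.not_dvd_ordCompl Nat.prime_two hm))

lemma oddPart_mul_two_pow (c e : ℕ) : oddPart (c * 2 ^ e) = oddPart c := by
  rw [oddPart, Nat.ordCompl_mul, Nat.ordCompl_self_pow Nat.prime_two, mul_one, oddPart]

lemma factorization_mul_two_pow {c : ℕ} (hc : c ≠ 0) (e : ℕ) :
    (c * 2 ^ e).factorization 2 = c.factorization 2 + e := by
  simp [Nat.factorization_mul hc, Nat.prime_two.factorization_self]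

lemma j0_le_iff {n m j : ℕ} (hm : n + 1 ≤ m) : j0 n m ≤ j ↔ n + 1 ≤ oddPart m * 2 ^ j := by
  refine ⟨fun h => ?_, fun h => Nat.sInf_le h⟩
  have hne : {j : ℕ | n + 1 ≤ oddPart m * 2 ^ j}.Nonempty :=
    ⟨m.factorization 2, by rwa [Set.mem_ofPred_eq, oddPart_mul_two_pow_factorization]⟩
  exact (Nat.sInf_mem hne).trans (Nat.mul_le_mul_left _ (Nat.pow_le_pow_right two_pos h))

lemma j0_le_factorization {n m : ℕ} (hm : n + 1 ≤ m) : j0 n m ≤ m.factorization 2 :=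
  (j0_le_iff hm).mpr (by rwa [oddPart_mul_two_pow_factorization])

lemma j0_mul_two_pow (n c e : ℕ) : j0 n (c * 2 ^ e) = j0 n c := by
  rw [j0, j0, oddPart_mul_two_pow]

def IsAllowedPart (n c : ℕ) : Prop := n + 1 ≤ c ∧ (2 * n < c → Odd c)

lemma mem_Pn_iff {n : ℕ} {N : Multiset ℕ} : N ∈ Pn n ↔ ∀ c ∈ N, IsAllowedPart n c := by
  simp only [Pn, IsAllowedPart, Set.mem_ofPred_eq, ← forall_and]

lemma j0_eq_factorization {n c : ℕ} (hc : IsAllowedPart n c) : j0 n c = c.factorization 2 := by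
  refine (j0_le_factorization hc.1).antisymm (not_lt.mp fun hlt => ?_)
  -- `c` is then even, hence `c ≤ 2n`, yet `c / 2 = oddPart c * 2 ^ (v₂ c - 1) ≥ n + 1`.
  obtain ⟨k, hk⟩ : ∃ k, c.factorization 2 = k + 1 := ⟨_, (Nat.succ_pred_eq_of_pos (by omega)).symm⟩
  have hhalf : oddPart c * 2 ^ k * 2 = c := by
    rw [mul_assoc, ← pow_succ, ← hk, oddPart_mul_two_pow_factorization]
  have hle : n + 1 ≤ oddPart c * 2 ^ k := (j0_le_iff hc.1).mp (by omega)
  have hodd : Odd c := hc.2 (by omega)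
  rw [← hhalf] at hodd
  exact Nat.not_even_iff_odd.mpr hodd (even_two.mul_left _)

noncomputable def psiBase (n m : ℕ) : ℕ := oddPart m * 2 ^ j0 n m

noncomputable def psiExp (n m : ℕ) : ℕ := m.factorization 2 - j0 n m

lemma psiPart_eq (n m : ℕ) : psiPart n m = Multiset.replicate (2 ^ psiExp n m) (psiBase n m) :=
  rfl

lemma psiBase_mul_two_pow_psiExp {n m : ℕ} (hm : n + 1 ≤ m) :
    psiBase n m * 2 ^ psiExp n m = m := by
  rw [psiBase, psiExp, mul_assoc, ← pow_add, Nat.add_sub_cancel' (j0_le_factorization hm),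
    oddPart_mul_two_pow_factorization]

lemma isAllowedPart_psiBase {n m : ℕ} (hm : n + 1 ≤ m) : IsAllowedPart n (psiBase n m) := by
  refine ⟨(j0_le_iff hm).mp le_rfl, fun hgt => ?_⟩
  rcases Nat.eq_zero_or_eq_succ_pred (j0 n m) with h0 | hsucc
  · rw [psiBase, h0, pow_zero, mul_one]
    exact odd_oddPart (by omega)
  · -- by minimality of `j₀`, halving `psiBase n m` lands at or below `n`
    have hhalf : oddPart m * 2 ^ (j0 n m).pred ≤ n :=
      not_lt.mp fun h => by have := (j0_le_iff hm).mpr h; omega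
    have : psiBase n m = oddPart m * 2 ^ (j0 n m).pred * 2 := by
      rw [psiBase, mul_assoc, ← pow_succ, ← Nat.succ_eq_add_one, ← hsucc]
    omega

lemma psiBase_mul_two_pow {n c : ℕ} (hc : IsAllowedPart n c) (e : ℕ) :
    psiBase n (c * 2 ^ e) = c := by
  rw [psiBase, j0_mul_two_pow, oddPart_mul_two_pow, j0_eq_factorization hc,
    oddPart_mul_two_pow_factorization]

lemma psiExp_mul_two_pow {n c : ℕ} (hc : IsAllowedPart n c) (e : ℕ) :
    psiExp n (c * 2 ^ e) = e := by
  rw [psiExp, j0_mul_two_pow, j0_eq_factorization hc,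
    factorization_mul_two_pow ((Nat.zero_le n).trans_lt hc.1).ne', Nat.add_sub_cancel_left]

lemma psiPart_mul_two_pow {n c : ℕ} (hc : IsAllowedPart n c) (e : ℕ) :
    psiPart n (c * 2 ^ e) = Multiset.replicate (2 ^ e) c := by
  rw [psiPart_eq, psiBase_mul_two_pow hc, psiExp_mul_two_pow hc]

lemma sum_psiPart {n m : ℕ} (hm : n + 1 ≤ m) : (psiPart n m).sum = m := by
  rw [psiPart_eq, Multiset.sum_replicate, smul_eq_mul, mul_comm, psiBase_mul_two_pow_psiExp hm]

lemma Psi_val (n : ℕ) (s : Finset ℕ) : Psi n s.val = ∑ m ∈ s, psiPart n m :=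
  rfl

lemma sum_Psi {n : ℕ} {M : Multiset ℕ} (hM : ∀ m ∈ M, n + 1 ≤ m) : (Psi n M).sum = M.sum := by
  rw [Psi, Multiset.sum_bind, Multiset.map_congr rfl fun m hm => sum_psiPart (hM m hm),
    Multiset.map_id']

lemma Psi_mapsTo (n : ℕ) : Set.MapsTo (Psi n) (Dn n) (Pn n) := by
  rintro M ⟨-, hM⟩
  refine mem_Pn_iff.mpr fun c hc => ?_
  obtain ⟨m, hm, hcm⟩ := Multiset.mem_bind.mp hc
  rw [psiPart_eq] at hcm
  rw [Multiset.eq_of_mem_replicate hcm]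
  exact isAllowedPart_psiBase (hM m hm)

lemma count_Psi {n : ℕ} {M : Multiset ℕ} (hM : M ∈ Dn n) (c : ℕ) :
    (Psi n M).count c =
      ∑ e ∈ ({m ∈ M.toFinset | psiBase n m = c}).image (psiExp n), 2 ^ e := by
  have hinj : Set.InjOn (psiExp n) ({m ∈ M.toFinset | psiBase n m = c} : Finset ℕ) := by
    intro m₁ hm₁ m₂ hm₂ he
    simp only [coe_filter, Multiset.mem_toFinset, Set.mem_ofPred_eq] at hm₁ hm₂
    rw [← psiBase_mul_two_pow_psiExp (hM.2 m₁ hm₁.1), ← psiBase_mul_two_pow_psiExp (hM.2 m₂ hm₂.1),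
      hm₁.2, hm₂.2, he]
  rw [sum_image hinj, sum_filter]
  conv_lhs => rw [← hM.1.dedup, ← Multiset.toFinset_val, Psi_val, Multiset.count_sum']
  refine sum_congr rfl fun m _ => ?_
  rw [psiPart_eq, Multiset.count_replicate]

lemma mem_iff_psiExp_mem_bitIndices {n : ℕ} {M : Multiset ℕ} (hM : M ∈ Dn n) {m : ℕ}
    (hm : n + 1 ≤ m) : m ∈ M ↔ psiExp n m ∈ ((Psi n M).count (psiBase n m)).bitIndices := by
  rw [← List.mem_toFinset, count_Psi hM, toFinset_bitIndices_sum_two_pow, mem_image]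
  refine ⟨fun h => ⟨m, by simpa using h, rfl⟩, ?_⟩
  rintro ⟨m', hm', he⟩
  simp only [mem_filter, Multiset.mem_toFinset] at hm'
  rw [← psiBase_mul_two_pow_psiExp hm, ← he, ← hm'.2, psiBase_mul_two_pow_psiExp (hM.2 m' hm'.1)]
  exact hm'.1

lemma Psi_injOn (n : ℕ) : Set.InjOn (Psi n) (Dn n) := by
  intro M₁ hM₁ M₂ hM₂ hPsi
  refine (Multiset.Nodup.ext hM₁.1 hM₂.1).mpr fun m => ?_
  by_cases hm : n + 1 ≤ m
  · rw [mem_iff_psiExp_mem_bitIndices hM₁ hm, mem_iff_psiExp_mem_bitIndices hM₂ hm, hPsi]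
  · exact iff_of_false (fun h => hm (hM₁.2 m h)) (fun h => hm (hM₂.2 m h))

def binarySplit (N : Multiset ℕ) : Finset ℕ :=
  N.toFinset.biUnion fun c => (N.count c).bitIndices.toFinset.image (c * 2 ^ ·)

lemma binarySplit_mem_Dn {n : ℕ} {N : Multiset ℕ} (hN : N ∈ Pn n) : (binarySplit N).val ∈ Dn n := by
  refine ⟨(binarySplit N).nodup, fun m hm => ?_⟩
  simp only [binarySplit, Finset.mem_val, mem_biUnion, mem_image, Multiset.mem_toFinset] at hm
  obtain ⟨c, hc, e, -, rfl⟩ := hm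
  exact (hN.1 c hc).trans (Nat.le_mul_of_pos_right c (by positivity))

lemma Psi_binarySplit {n : ℕ} {N : Multiset ℕ} (hN : N ∈ Pn n) :
    Psi n (binarySplit N).val = N := by
  have hallowed : ∀ c ∈ N.toFinset, IsAllowedPart n c :=
    fun c hc => mem_Pn_iff.mp hN c (Multiset.mem_toFinset.mp hc)
  have hdisj : (N.toFinset : Set ℕ).PairwiseDisjoint
      fun c => (N.count c).bitIndices.toFinset.image (c * 2 ^ ·) := by
    intro c₁ hc₁ c₂ hc₂ hne
    refine disjoint_left.mpr ?_
    simp only [mem_image]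
    rintro _ ⟨e₁, -, rfl⟩ ⟨e₂, -, he⟩
    exact hne (by rw [← psiBase_mul_two_pow (hallowed c₁ hc₁) e₁, ← he,
      psiBase_mul_two_pow (hallowed c₂ hc₂)])
  rw [Psi_val, binarySplit, sum_biUnion hdisj]
  conv_rhs => rw [← Multiset.toFinset_sum_count_nsmul_eq N]
  refine sum_congr rfl fun c hc => ?_
  have hc0 : 0 < c := (Nat.zero_le n).trans_lt (hallowed c hc).1
  rw [sum_image fun e₁ _ e₂ _ h =>
    Nat.pow_right_injective le_rfl (Nat.eq_of_mul_eq_mul_left hc0 h)]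
  simp only [psiPart_mul_two_pow (hallowed c hc), ← Multiset.nsmul_singleton]
  rw [← sum_smul, sum_toFinset_bitIndices_two_pow]

lemma Psi_surjOn (n : ℕ) : Set.SurjOn (Psi n) (Dn n) (Pn n) :=
  fun _ hN => ⟨_, binarySplit_mem_Dn hN, Psi_binarySplit hN⟩

theorem psi_bijOn_weight_preserving_general (n : ℕ) :
    Set.BijOn (Psi n) (Dn n) (Pn n) ∧ ∀ M ∈ Dn n, (Psi n M).sum = M.sum :=
  ⟨⟨Psi_mapsTo n, Psi_injOn n, Psi_surjOn n⟩, fun _ hM => sum_Psi hM.2⟩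

/-- For every `n ≥ 1`, the explicit map `Ψ_n` is a weight-preserving bijection from `D_n`
onto `P_n`. -/
theorem psi_bijOn_weight_preserving (n : ℕ) (hn : 1 ≤ n) :
    Set.BijOn (Psi n) (Dn n) (Pn n) ∧ ∀ M ∈ Dn n, (Psi n M).sum = M.sum :=
  psi_bijOn_weight_preserving_general n
end

section
/- With φ(q) = ∑_{k∈ℤ} q^{k^2}, the identity φ(−q)^2 = ∏(q^9;q^9)_∞^4/(q^{18};q^{18})_∞^2 − 4q·(q^{18};q^{18})_∞ (q^9;q^9)_∞ (q^3;q^3)_∞ / (q^6;q^6)_∞ + 4q^2·(q^{18};q^{18})_∞^4 (q^3;q^3)_∞^2 / ((q^9;q^9)_∞^2 (q^6;q^6)_∞^2) holds as formal power series; in particular this gives the 3-dissection of (q;q)_∞^2/(−q;q)_∞^2. -/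
open PowerSeries

/-- The infinite sum `∑_{n≥0} f n` of power series, where the `n`-th term is assumed to have
order `> n`, defined coefficientwise by truncation. -/
noncomputable def psum (f : ℕ → PowerSeries ℚ) : PowerSeries ℚ :=
  PowerSeries.mk fun d => PowerSeries.coeff d (∑ j ∈ Finset.range (d + 1), f j)

/-- `φ(−q) = ∑_{k∈ℤ} (−q)^{k²} = 1 + 2∑_{k≥1} (−1)^k q^{k²}`. -/
noncomputable def phiNeg : PowerSeries ℚ :=
  1 + psum (fun k => ((2 : ℚ) * (-1) ^ (k + 1)) • (X : PowerSeries ℚ) ^ ((k + 1) ^ 2))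

/-- `(q^a;q^a)_∞ = ∏_{k≥1} (1 − q^{ak})`. -/
noncomputable def P (a : ℕ) : PowerSeries ℚ :=
  pprod (fun k => 1 - (X : PowerSeries ℚ) ^ (a * (k + 1)))

/-! By the Jacobi triple product
`f(-q^α, -q^β) = (q^α; q^{α+β})_∞ (q^β; q^{α+β})_∞ (q^{α+β}; q^{α+β})_∞`,
the theta series `θ(9, 9) = f(-q^9, -q^9)` equals `(q^9;q^9)_∞^2 / (q^18;q^18)_∞` and
`θ(3, 15) = f(-q^3, -q^15)` equals `(q^3;q^3)_∞ (q^18;q^18)_∞^2 / ((q^6;q^6)_∞ (q^9;q^9)_∞)`.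
Sorting the exponents `k` of `φ(-q) = ∑ (-1)^k q^{k^2}` by their residue mod 3 gives
`φ(-q) = θ(9, 9) - 2q θ(3, 15)`, and squaring gives the theorem.

The triple product is the limit `m → ∞` of its finite form
`∏_{j<m} (1 + x Q^j)(1 + y Q^j) = ∑_{|k| ≤ m} [2m, m+k]_Q x^{k(k+1)/2} y^{k(k-1)/2}` (`Q = xy`),
an identity in any commutative ring: for `Q = X^s` one has `(Q;Q)_m [2m, m+k]_Q ≡ 1` modulo
`Q^{m+1-|k|}`. Infinite sums and products are compared modulo `X^n` for every `n`.
-/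

open Finset

section IntervalSums

variable {M : Type*} [AddCommMonoid M]

lemma sum_Icc_add_right (f : ℤ → M) (a b c : ℤ) :
    ∑ k ∈ Icc a b, f (k + c) = ∑ k ∈ Icc (a + c) (b + c), f k := by
  rw [← map_add_right_Icc, sum_map]
  rfl

lemma sum_Icc_neg (f : ℤ → M) (a : ℤ) : ∑ k ∈ Icc (-a) a, f (-k) = ∑ k ∈ Icc (-a) a, f k :=
  sum_nbij' (- ·) (- ·) (fun _ => by simp only [mem_Icc]; omega)
    (fun _ => by simp only [mem_Icc]; omega) (by simp) (by simp) (by simp)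

lemma sum_Icc_eq_sum_Icc_three_mul (f : ℤ → M) (m : ℕ) :
    ∑ j ∈ Icc (-(3 * m + 1 : ℤ)) (3 * m + 1), f j =
      ∑ k ∈ Icc (-(m : ℤ)) m, (f (3 * k - 1) + f (3 * k) + f (3 * k + 1)) := by
  have hsplit : ∀ k : ℤ, f (3 * k - 1) + f (3 * k) + f (3 * k + 1) =
      ∑ r ∈ range 3, f (3 * k + r - 1) := fun k => by
    simp only [sum_range_succ, sum_range_zero]
    norm_num [add_sub_assoc]
  simp only [hsplit, ← sum_product']
  symm
  refine sum_nbij' (fun p => 3 * p.1 + p.2 - 1) (fun j => ((j + 1) / 3, ((j + 1) % 3).toNat))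
    ?_ ?_ ?_ ?_ (fun _ _ => rfl) <;> simp only [mem_product, mem_Icc, mem_range, Prod.forall,
      Prod.mk.injEq] <;> intros <;> omega

lemma sum_Icc_eq_add_sum_range (f : ℤ → M) (N : ℕ) :
    ∑ k ∈ Icc (-N : ℤ) N, f k = f 0 + ∑ j ∈ range N, (f (j + 1) + f (-(j + 1))) := by
  induction N with
  | zero => simp
  | succ N ih =>
    have hIcc : Icc (-(N + 1 : ℕ) : ℤ) (N + 1 : ℕ) =
        insert (-(N + 1 : ℤ)) (insert (N + 1 : ℤ) (Icc (-N : ℤ) N)) := by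
      ext; simp only [mem_Icc, mem_insert]; omega
    rw [hIcc, sum_insert (by simp only [mem_insert, mem_Icc]; omega),
      sum_insert (by simp only [mem_Icc]; omega), ih, sum_range_succ]
    abel

end IntervalSums

lemma prod_range_mul_eq_prod_prod {M : Type*} [CommMonoid M] (f : ℕ → M) (c n : ℕ) :
    ∏ j ∈ range (c * n), f j = ∏ i ∈ range n, ∏ r ∈ range c, f (c * i + r) := by
  induction n with
  | zero => simp
  | succ n ih => rw [mul_add, mul_one, prod_range_add, ih, prod_range_succ]

def tri (k : ℤ) : ℕ := (k * (k + 1) / 2).toNat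

lemma two_mul_tri (k : ℤ) : 2 * (tri k : ℤ) = k * (k + 1) := by
  have hnonneg : 0 ≤ k * (k + 1) := by
    rcases le_or_gt 0 k with h | h
    · positivity
    · nlinarith
  rw [tri, Int.toNat_of_nonneg (Int.ediv_nonneg hnonneg two_pos.le)]
  exact Int.mul_ediv_cancel' (Int.even_mul_succ_self k).two_dvd

lemma tri_add_tri_neg (k : ℤ) : tri k + tri (-k) = k.natAbs ^ 2 := by
  have h₁ := two_mul_tri k
  have h₂ := two_mul_tri (-k)
  zify
  rw [sq_abs]
  linarith

lemma tri_add_one (k : ℤ) : (tri (k + 1) : ℤ) = tri k + k + 1 := by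
  linarith [two_mul_tri k, two_mul_tri (k + 1)]

lemma tri_neg_add_one (k : ℤ) : (tri (-(k + 1)) : ℤ) = tri (-k) + k := by
  linarith [two_mul_tri (-k), two_mul_tri (-(k + 1))]

lemma natAbs_le_mul_tri_add_mul_tri {α β : ℕ} (hα : 0 < α) (hβ : 0 < β) (k : ℤ) :
    k.natAbs ≤ α * tri k + β * tri (-k) :=
  calc k.natAbs ≤ k.natAbs ^ 2 := Nat.le_self_pow two_ne_zero _
    _ = tri k + tri (-k) := (tri_add_tri_neg k).symm
    _ ≤ α * tri k + β * tri (-k) :=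
      add_le_add (Nat.le_mul_of_pos_left _ hα) (Nat.le_mul_of_pos_left _ hβ)

section CommRing

variable {R : Type*} [CommRing R]

/-- Ramanujan's theta function is `f(x, y) = ∑_{k ∈ ℤ} thetaTerm x y k`. -/
def thetaTerm (x y : R) (k : ℤ) : R := x ^ tri k * y ^ tri (-k)

lemma thetaTerm_zero (x y : R) : thetaTerm x y 0 = 1 := by
  simp [thetaTerm, tri]

lemma thetaTerm_swap (x y : R) (k : ℤ) : thetaTerm y x (-k) = thetaTerm x y k := by
  rw [thetaTerm, thetaTerm, neg_neg, mul_comm]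

lemma thetaTerm_self (x : R) (k : ℤ) : thetaTerm x x k = x ^ k.natAbs ^ 2 := by
  rw [thetaTerm, ← pow_add, tri_add_tri_neg]

lemma thetaTerm_mul_left (x y : R) {k : ℤ} {m : ℕ} (hk : k ≤ m) :
    thetaTerm x y k * (x * (x * y) ^ m) = (x * y) ^ (m - k).toNat * thetaTerm x y (k + 1) := by
  have e₁ : tri k + (1 + m) = (m - k).toNat + tri (k + 1) := by
    have := tri_add_one k; omega
  have e₂ : tri (-k) + m = (m - k).toNat + tri (-(k + 1)) := by
    have := tri_neg_add_one k; omega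
  calc thetaTerm x y k * (x * (x * y) ^ m) = x ^ (tri k + (1 + m)) * y ^ (tri (-k) + m) := by
        rw [thetaTerm]; ring
    _ = _ := by rw [e₁, e₂, thetaTerm]; ring

lemma thetaTerm_mul_right (x y : R) {k : ℤ} {m : ℕ} (hk : -m ≤ k) :
    thetaTerm x y k * (y * (x * y) ^ m) = (x * y) ^ (m + k).toNat * thetaTerm x y (k - 1) := by
  have h := thetaTerm_mul_left y x (k := -k) (m := m) (by omega)
  rwa [thetaTerm_swap, mul_comm y x, sub_neg_eq_add, show -k + 1 = -(k - 1) by ring,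
    thetaTerm_swap] at h

/-- The Gaussian binomial coefficient `[2m, m+k]_Q`, built by a two-step `Q`-Pascal recurrence. -/
def centralQBinom (Q : R) : ℕ → ℤ → R
  | 0 => fun k => if k = 0 then 1 else 0
  | m + 1 => fun k =>
      (1 + Q ^ (2 * m + 1)) * centralQBinom Q m k
        + Q ^ ((m + 1 : ℤ) - k).toNat * centralQBinom Q m (k - 1)
        + Q ^ ((m + 1 : ℤ) + k).toNat * centralQBinom Q m (k + 1)

section

variable (Q : R)

lemma centralQBinom_succ (m : ℕ) (k : ℤ) :
    centralQBinom Q (m + 1) k =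
      (1 + Q ^ (2 * m + 1)) * centralQBinom Q m k
        + Q ^ ((m + 1 : ℤ) - k).toNat * centralQBinom Q m (k - 1)
        + Q ^ ((m + 1 : ℤ) + k).toNat * centralQBinom Q m (k + 1) := rfl

lemma centralQBinom_eq_zero {m : ℕ} {k : ℤ} (h : m < k.natAbs) : centralQBinom Q m k = 0 := by
  induction m generalizing k with
  | zero => simp [centralQBinom]; omega
  | succ m ih => rw [centralQBinom_succ, ih (by omega), ih (by omega), ih (by omega)]; ring

lemma centralQBinom_of_natAbs_eq {m : ℕ} {k : ℤ} (h : k.natAbs = m) : centralQBinom Q m k = 1 := by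
  induction m generalizing k with
  | zero => simp [centralQBinom]; omega
  | succ m ih =>
    rw [centralQBinom_succ, centralQBinom_eq_zero Q (k := k) (by omega)]
    rcases le_or_gt 0 k with hk | hk
    · rw [ih (k := k - 1) (by omega), centralQBinom_eq_zero Q (k := k + 1) (by omega),
        show ((m + 1 : ℤ) - k).toNat = 0 by omega]
      ring
    · rw [ih (k := k + 1) (by omega), centralQBinom_eq_zero Q (k := k - 1) (by omega),
        show ((m + 1 : ℤ) + k).toNat = 0 by omega]
      ring

/-- The `Q`-Pochhammer symbol `(Q; Q)_n`. -/
def qPoch (n : ℕ) : R := ∏ i ∈ range n, (1 - Q ^ (i + 1))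

lemma qPoch_zero : qPoch Q 0 = 1 := prod_range_zero _

lemma qPoch_succ (n : ℕ) : qPoch Q (n + 1) = qPoch Q n * (1 - Q ^ (n + 1)) :=
  prod_range_succ _ _

lemma qPoch_mul_qPoch_mul_centralQBinom {m a b : ℕ} (h : a + b = 2 * m) :
    qPoch Q a * qPoch Q b * centralQBinom Q m (b - m) = qPoch Q (2 * m) := by
  induction m generalizing a b with
  | zero =>
    obtain ⟨rfl, rfl⟩ : a = 0 ∧ b = 0 := by omega
    simp [qPoch_zero, centralQBinom]
  | succ m ih =>
    rcases a with _ | a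
    · rw [centralQBinom_of_natAbs_eq Q (by omega), qPoch_zero, ← h, zero_add, one_mul, mul_one]
    rcases b with _ | b
    · rw [centralQBinom_of_natAbs_eq Q (by omega), qPoch_zero, ← h, add_zero, mul_one, mul_one]
    have hab : a + b = 2 * m := by omega
    have h₀ : qPoch Q (a + 1) * qPoch Q (b + 1) * centralQBinom Q m (b - m) =
        (1 - Q ^ (a + 1)) * (1 - Q ^ (b + 1)) * qPoch Q (2 * m) := by
      rw [qPoch_succ, qPoch_succ, ← ih hab]; ring
    have hdown : qPoch Q (a + 1) * qPoch Q (b + 1) * centralQBinom Q m (b - m - 1) =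
        (1 - Q ^ b) * (1 - Q ^ (b + 1)) * qPoch Q (2 * m) := by
      rcases b with _ | b
      · rw [centralQBinom_eq_zero Q (by omega)]; ring
      · rw [← ih (a := a + 1) (b := b) (by omega), qPoch_succ Q (b + 1), qPoch_succ Q b]
        push_cast; ring_nf
    have hup : qPoch Q (a + 1) * qPoch Q (b + 1) * centralQBinom Q m (b - m + 1) =
        (1 - Q ^ a) * (1 - Q ^ (a + 1)) * qPoch Q (2 * m) := by
      rcases a with _ | a
      · rw [centralQBinom_eq_zero Q (by omega)]; ring
      · rw [← ih (a := a) (b := b + 1) (by omega), qPoch_succ Q (a + 1), qPoch_succ Q a]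
        push_cast; ring_nf
    rw [show ((b + 1 : ℕ) : ℤ) - (m + 1 : ℕ) = b - m by push_cast; ring, centralQBinom_succ,
      show ((m + 1 : ℤ) - (b - m)).toNat = a + 1 by omega,
      show ((m + 1 : ℤ) + (b - m)).toNat = b + 1 by omega,
      show 2 * (m + 1) = 2 * m + 1 + 1 by ring, qPoch_succ Q (2 * m + 1), qPoch_succ Q (2 * m)]
    rw [← hab] at h₀ hdown hup ⊢
    linear_combination (1 + Q ^ (a + b + 1)) * h₀ + Q ^ (a + 1) * hdown + Q ^ (b + 1) * hup

lemma map_qPoch_of_le {S : Type*} [CommRing S] (φ : R →+* S) {d n : ℕ}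
    (hQ : φ (Q ^ (d + 1)) = 0) (h : d ≤ n) : φ (qPoch Q n) = φ (qPoch Q d) := by
  have htail : ∏ i ∈ Ico d n, φ (1 - Q ^ (i + 1)) = 1 := prod_eq_one fun i hi => by
    rw [map_sub, map_one, show i + 1 = d + 1 + (i - d) by grind, pow_add, map_mul, hQ, zero_mul,
      sub_zero]
  rw [qPoch, ← prod_range_mul_prod_Ico _ h, map_mul, map_prod φ _ (Ico d n), htail, mul_one, qPoch]

lemma sum_Icc_centralQBinom_mul {m : ℕ} (g : ℤ → R) {a b : ℤ} (ha : a ≤ -m) (hb : m ≤ b) :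
    ∑ k ∈ Icc a b, centralQBinom Q m k * g k = ∑ k ∈ Icc (-m : ℤ) m, centralQBinom Q m k * g k := by
  refine (sum_subset (Icc_subset_Icc ha hb) fun k _ hk => ?_).symm
  rw [centralQBinom_eq_zero Q (by simp only [mem_Icc] at hk; omega), zero_mul]

lemma sum_Icc_succ_centralQBinom_sub {m : ℕ} (g : ℤ → R) {c : ℤ} (hc : |c| ≤ 1) :
    ∑ k ∈ Icc (-(m + 1) : ℤ) (m + 1), centralQBinom Q m (k - c) * g k =
      ∑ k ∈ Icc (-m : ℤ) m, centralQBinom Q m k * g (k + c) := by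
  have hshift := sum_Icc_add_right (fun k => centralQBinom Q m (k - c) * g k) (-(m + 1) - c)
    (m + 1 - c) c
  simp only [sub_add_cancel, add_sub_cancel_right] at hshift
  obtain ⟨hc₀, hc₁⟩ := abs_le.1 hc
  rw [← hshift, sum_Icc_centralQBinom_mul Q _ (by omega) (by omega)]

end

lemma sum_centralQBinom_mul_thetaTerm_mul_left (x y : R) (m : ℕ) :
    (∑ k ∈ Icc (-m : ℤ) m, centralQBinom (x * y) m k * thetaTerm x y k) * (x * (x * y) ^ m) =
      ∑ k ∈ Icc (-(m + 1) : ℤ) (m + 1),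
        (x * y) ^ ((m + 1 : ℤ) - k).toNat * centralQBinom (x * y) m (k - 1) * thetaTerm x y k :=
  calc _ = ∑ k ∈ Icc (-m : ℤ) m, centralQBinom (x * y) m k *
        ((x * y) ^ ((m + 1 : ℤ) - (k + 1)).toNat * thetaTerm x y (k + 1)) := by
        rw [sum_mul]
        refine sum_congr rfl fun k hk => ?_
        rw [mul_assoc, thetaTerm_mul_left x y (mem_Icc.1 hk).2,
          show (m + 1 : ℤ) - (k + 1) = m - k by ring]
    _ = _ := (sum_Icc_succ_centralQBinom_sub _
        (fun k => (x * y) ^ ((m + 1 : ℤ) - k).toNat * thetaTerm x y k) (c := 1)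
        (by norm_num)).symm.trans (sum_congr rfl fun k _ => by ring)

lemma sum_centralQBinom_mul_thetaTerm_mul_right (x y : R) (m : ℕ) :
    (∑ k ∈ Icc (-m : ℤ) m, centralQBinom (x * y) m k * thetaTerm x y k) * (y * (x * y) ^ m) =
      ∑ k ∈ Icc (-(m + 1) : ℤ) (m + 1),
        (x * y) ^ ((m + 1 : ℤ) + k).toNat * centralQBinom (x * y) m (k + 1) * thetaTerm x y k :=
  calc _ = ∑ k ∈ Icc (-m : ℤ) m, centralQBinom (x * y) m k *
        ((x * y) ^ ((m + 1 : ℤ) + (k + -1)).toNat * thetaTerm x y (k + -1)) := by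
        rw [sum_mul]
        refine sum_congr rfl fun k hk => ?_
        rw [mul_assoc, ← sub_eq_add_neg, thetaTerm_mul_right x y (mem_Icc.1 hk).1,
          show (m + 1 : ℤ) + (k - 1) = m + k by ring]
    _ = _ := (sum_Icc_succ_centralQBinom_sub _
        (fun k => (x * y) ^ ((m + 1 : ℤ) + k).toNat * thetaTerm x y k) (c := -1)
        (by norm_num)).symm.trans (sum_congr rfl fun k _ => by rw [sub_neg_eq_add]; ring)

theorem finite_jacobi_triple_product (x y : R) (m : ℕ) :
    ∏ j ∈ range m, ((1 + x * (x * y) ^ j) * (1 + y * (x * y) ^ j)) =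
      ∑ k ∈ Icc (-m : ℤ) m, centralQBinom (x * y) m k * thetaTerm x y k := by
  induction m with
  | zero => simp [centralQBinom, thetaTerm_zero]
  | succ m ih =>
    set c := 1 + (x * y) ^ (2 * m + 1)
    have hmid : (∑ k ∈ Icc (-m : ℤ) m, centralQBinom (x * y) m k * thetaTerm x y k) * c =
        ∑ k ∈ Icc (-(m + 1) : ℤ) (m + 1), c * centralQBinom (x * y) m k * thetaTerm x y k :=
      calc _ = ∑ k ∈ Icc (-m : ℤ) m, centralQBinom (x * y) m k * (c * thetaTerm x y k) := by
            rw [sum_mul]; exact sum_congr rfl fun _ _ => by ring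
        _ = ∑ k ∈ Icc (-(m + 1) : ℤ) (m + 1), centralQBinom (x * y) m k * (c * thetaTerm x y k) :=
            (sum_Icc_centralQBinom_mul _ _ (by omega) (by omega)).symm
        _ = _ := sum_congr rfl fun _ _ => by ring
    have hfactor : (1 + x * (x * y) ^ m) * (1 + y * (x * y) ^ m) =
        c + x * (x * y) ^ m + y * (x * y) ^ m := by ring
    rw [prod_range_succ, ih, hfactor, mul_add, mul_add, hmid,
      sum_centralQBinom_mul_thetaTerm_mul_left, sum_centralQBinom_mul_thetaTerm_mul_right]
    push_cast
    rw [← sum_add_distrib, ← sum_add_distrib]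
    exact sum_congr rfl fun k _ => by rw [centralQBinom_succ]; ring

lemma sum_Icc_thetaTerm_self_three_dissection (x : R) (m : ℕ) :
    ∑ j ∈ Icc (-(3 * m + 1 : ℤ)) (3 * m + 1), thetaTerm x x j =
      ∑ k ∈ Icc (-m : ℤ) m, thetaTerm (x ^ 9) (x ^ 9) k +
        2 * x * ∑ k ∈ Icc (-m : ℤ) m, thetaTerm (x ^ 3) (x ^ 15) k := by
  have hmid (k : ℤ) : thetaTerm x x (3 * k) = thetaTerm (x ^ 9) (x ^ 9) k := by
    rw [thetaTerm_self, thetaTerm_self, ← pow_mul, Int.natAbs_mul]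
    ring_nf
  have hlow (k : ℤ) : thetaTerm x x (3 * k - 1) = x * thetaTerm (x ^ 3) (x ^ 15) k := by
    rw [thetaTerm_self, thetaTerm, ← pow_mul, ← pow_mul, ← pow_add, ← pow_succ']
    congr 1
    have h₁ := two_mul_tri k
    have h₂ := two_mul_tri (-k)
    zify
    rw [sq_abs]
    linarith
  have hhigh (k : ℤ) : thetaTerm x x (3 * k + 1) = thetaTerm x x (3 * -k - 1) := by
    rw [← thetaTerm_swap, show -(3 * k + 1) = 3 * -k - 1 by ring]
  rw [sum_Icc_eq_sum_Icc_three_mul]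
  simp only [sum_add_distrib, hmid, hhigh, hlow]
  rw [sum_Icc_neg (fun k => x * thetaTerm (x ^ 3) (x ^ 15) k), ← mul_sum]
  ring

end CommRing

section Truncation

variable {R : Type*} [CommRing R]

noncomputable abbrev modX (n : ℕ) : R⟦X⟧ →+* R⟦X⟧ ⧸ Ideal.span {(X : R⟦X⟧) ^ n} :=
  Ideal.Quotient.mk _

variable {n m α β : ℕ} {f g : R⟦X⟧}

lemma modX_eq_iff : modX n f = modX n g ↔ ∀ i < n, coeff i f = coeff i g := by
  simp [Ideal.Quotient.eq, Ideal.mem_span_singleton, X_pow_dvd_iff, sub_eq_zero]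

lemma eq_of_forall_modX_eq (h : ∀ n, modX n f = modX n g) : f = g :=
  ext fun i => modX_eq_iff.1 (h (i + 1)) i i.lt_succ_self

lemma modX_eq_of_le (h : n ≤ m) (e : modX m f = modX m g) : modX n f = modX n g :=
  modX_eq_iff.2 fun i hi => modX_eq_iff.1 e i (hi.trans_le h)

lemma modX_X_pow (h : n ≤ m) : modX n (X ^ m : R⟦X⟧) = 0 :=
  Ideal.Quotient.eq_zero_iff_mem.2 (Ideal.mem_span_singleton.2 (pow_dvd_pow X h))

lemma modX_mul_X_pow (e : modX n f = modX n g) (k : ℕ) :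
    modX (n + k) (f * X ^ k) = modX (n + k) (g * X ^ k) := by
  rw [Ideal.Quotient.eq, Ideal.mem_span_singleton, ← sub_mul, pow_add]
  exact mul_dvd_mul_right (Ideal.mem_span_singleton.1 (Ideal.Quotient.eq.1 e)) _

lemma modX_mk_coeff {F : ℕ → R⟦X⟧} (hF : ∀ n N, n ≤ N → modX n (F n) = modX n (F N))
    {N : ℕ} (h : n ≤ N) : modX n (mk fun d => coeff d (F (d + 1))) = modX n (F N) :=
  modX_eq_iff.2 fun i hi => by
    rw [coeff_mk]
    exact modX_eq_iff.1 (hF (i + 1) N (by omega)) i i.lt_succ_self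

/-- Modulo `Q ^ (d + 1)` with `d = m - |k|`, every Pochhammer symbol in
`qPoch_mul_qPoch_mul_centralQBinom` reduces to the unit `(Q; Q)_d`, which then cancels. -/
lemma modX_qPoch_mul_centralQBinom {s : ℕ} (hs : 0 < s) {k : ℤ} (hk : k.natAbs ≤ m) :
    modX (s * (m + 1 - k.natAbs)) (qPoch (X ^ s : R⟦X⟧) m * centralQBinom (X ^ s) m k) = 1 := by
  set d := m - k.natAbs
  set φ := modX (R := R) (s * (d + 1))
  have hd : m + 1 - k.natAbs = d + 1 := by omega
  have hQ : φ ((X ^ s) ^ (d + 1)) = 0 := by rw [← pow_mul]; exact modX_X_pow le_rfl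
  have hunit : IsUnit (φ (qPoch (X ^ s) d)) := by
    refine IsUnit.map φ (isUnit_iff_constantCoeff.2 ?_)
    simp [qPoch, map_prod, hs.ne']
  have hclosed := congrArg φ (qPoch_mul_qPoch_mul_centralQBinom (X ^ s : R⟦X⟧) (m := m)
    (a := (m - k).toNat) (b := (m + k).toNat) (by omega))
  rw [show ((m + k).toNat : ℤ) - m = k by omega, map_mul, map_mul,
    map_qPoch_of_le _ φ hQ (n := (m - k).toNat) (by omega),
    map_qPoch_of_le _ φ hQ (n := (m + k).toNat) (by omega),
    map_qPoch_of_le _ φ hQ (n := 2 * m) (by omega)] at hclosed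
  rw [hd, map_mul, map_qPoch_of_le _ φ hQ (by omega)]
  exact hunit.mul_left_cancel (by rw [← mul_assoc, hclosed, mul_one])

lemma thetaTerm_neg_X_pow (k : ℤ) :
    thetaTerm (-X ^ α : R⟦X⟧) (-X ^ β) k =
      (-1) ^ k.natAbs ^ 2 * X ^ (α * tri k + β * tri (-k)) := by
  rw [thetaTerm, neg_pow, neg_pow, ← tri_add_tri_neg]
  ring

lemma modX_thetaTerm_eq_zero (hα : 0 < α) (hβ : 0 < β) {k : ℤ} (h : n ≤ k.natAbs) :
    modX n (thetaTerm (-X ^ α : R⟦X⟧) (-X ^ β) k) = 0 := by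
  rw [thetaTerm_neg_X_pow, map_mul, modX_X_pow (h.trans (natAbs_le_mul_tri_add_mul_tri hα hβ k)), mul_zero]

lemma modX_qPoch_mul_centralQBinom_mul_thetaTerm (hα : 0 < α) (hβ : 0 < β) {k : ℤ}
    (hk : k.natAbs ≤ n) :
    modX n (qPoch (X ^ (α + β) : R⟦X⟧) n *
      (centralQBinom (X ^ (α + β)) n k * thetaTerm (-X ^ α) (-X ^ β) k)) =
      modX n (thetaTerm (-X ^ α) (-X ^ β) k) := by
  have hs : 0 < α + β := by omega
  set e := α * tri k + β * tri (-k)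
  have he := natAbs_le_mul_tri_add_mul_tri hα hβ k
  have hrate : n - e ≤ (α + β) * (n + 1 - k.natAbs) := by
    have := Nat.le_mul_of_pos_left (n + 1 - k.natAbs) hs
    omega
  have hone := modX_eq_of_le hrate
    ((modX_qPoch_mul_centralQBinom (R := R) hs hk).trans (map_one _).symm)
  rw [← mul_assoc, thetaTerm_neg_X_pow, mul_left_comm, map_mul, map_mul (modX n) ((-1) ^ _)]
  congr 1
  refine modX_eq_of_le (m := n - e + e) (by omega) ?_
  rw [← one_mul (X ^ e), ← mul_assoc, mul_one]
  exact modX_mul_X_pow hone e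

end Truncation

section PowerSeriesQ

variable {n N : ℕ}

lemma modX_pprod {f : ℕ → ℚ⟦X⟧} (hf : ∀ j, modX (j + 1) (f j) = 1) (h : n ≤ N) :
    modX n (pprod f) = modX n (∏ j ∈ range N, f j) := by
  refine modX_mk_coeff (F := fun N => ∏ j ∈ range N, f j) (fun n N hnN => ?_) h
  have htail : ∏ j ∈ Ico n N, modX n (f j) = 1 := prod_eq_one fun j hj => by
    rw [modX_eq_of_le (by simp only [mem_Ico] at hj; omega) ((hf j).trans (map_one _).symm),
      map_one]
  rw [← prod_range_mul_prod_Ico _ hnN, map_mul, map_prod _ _ (Ico n N), htail, mul_one]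

lemma modX_psum {f : ℕ → ℚ⟦X⟧} (hf : ∀ j, modX (j + 1) (f j) = 0) (h : n ≤ N) :
    modX n (psum f) = modX n (∑ j ∈ range N, f j) := by
  refine modX_mk_coeff (F := fun N => ∑ j ∈ range N, f j) (fun n N hnN => ?_) h
  have htail : ∑ j ∈ Ico n N, modX n (f j) = 0 := sum_eq_zero fun j hj => by
    rw [modX_eq_of_le (by simp only [mem_Ico] at hj; omega) ((hf j).trans (map_zero _).symm),
      map_zero]
  rw [← sum_range_add_sum_Ico _ hnN, map_add, map_sum _ _ (Ico n N), htail, add_zero]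

/-- `(q^a; q^s)_∞ = ∏_{j ≥ 0} (1 - q^{a + s j})`. -/
noncomputable def pochInf (a s : ℕ) : ℚ⟦X⟧ := pprod fun j => 1 - X ^ (a + s * j)

lemma P_eq_pochInf (a : ℕ) : P a = pochInf a a := by
  simp only [P, pochInf, mul_add, mul_one, add_comm]

lemma modX_pochInf {a s : ℕ} (ha : 0 < a) (hs : 0 < s) (h : n ≤ N) :
    modX n (pochInf a s) = modX n (∏ j ∈ range N, (1 - X ^ (a + s * j))) :=
  modX_pprod (fun j => by
    rw [map_sub, modX_X_pow (by nlinarith), sub_zero, map_one]) h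

lemma pochInf_eq_prod_pochInf {a s : ℕ} (c : ℕ) (ha : 0 < a) (hs : 0 < s) (hc : 0 < c) :
    pochInf a s = ∏ r ∈ range c, pochInf (a + s * r) (c * s) := by
  refine eq_of_forall_modX_eq fun n => ?_
  rw [modX_pochInf ha hs (N := c * n) (Nat.le_mul_of_pos_left n hc), map_prod (modX n),
    map_prod (modX n), prod_range_mul_eq_prod_prod, prod_comm]
  refine prod_congr rfl fun r _ => ?_
  rw [modX_pochInf (by positivity) (by positivity) le_rfl, map_prod (modX n)]
  exact prod_congr rfl fun i _ => by ring_nf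

/-- `θ(α, β) = f(-q^α, -q^β) = ∑_{k ∈ ℤ} (-1)^k q^{α k(k+1)/2 + β k(k-1)/2}`. -/
noncomputable def theta (α β : ℕ) : ℚ⟦X⟧ :=
  1 + psum fun j => thetaTerm (-X ^ α) (-X ^ β) ((j : ℤ) + 1) +
    thetaTerm (-X ^ α) (-X ^ β) (-((j : ℤ) + 1))

variable {α β : ℕ}

lemma modX_theta (hα : 0 < α) (hβ : 0 < β) (h : n ≤ N) :
    modX n (theta α β) = modX n (∑ k ∈ Icc (-N : ℤ) N, thetaTerm (-X ^ α) (-X ^ β) k) := by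
  rw [sum_Icc_eq_add_sum_range, thetaTerm_zero, theta, map_add, map_add, modX_psum _ h]
  intro j
  rw [map_add, modX_thetaTerm_eq_zero hα hβ (by omega), modX_thetaTerm_eq_zero hα hβ (by omega),
    add_zero]

theorem jacobi_triple_product (hα : 0 < α) (hβ : 0 < β) :
    theta α β = pochInf (α + β) (α + β) * pochInf α (α + β) * pochInf β (α + β) := by
  refine eq_of_forall_modX_eq fun n => ?_
  have hs : 0 < α + β := by omega
  have hfin := finite_jacobi_triple_product (-X ^ α : ℚ⟦X⟧) (-X ^ β) n
  rw [neg_mul_neg, ← pow_add] at hfin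
  have hpoch : ∏ j ∈ range n, (1 - X ^ (α + β + (α + β) * j)) = qPoch (X ^ (α + β) : ℚ⟦X⟧) n :=
    prod_congr rfl fun j _ => by ring
  have hpair : (∏ j ∈ range n, (1 - X ^ (α + (α + β) * j) : ℚ⟦X⟧)) *
      ∏ j ∈ range n, (1 - X ^ (β + (α + β) * j)) =
      ∏ j ∈ range n, ((1 + -X ^ α * (X ^ (α + β)) ^ j) * (1 + -X ^ β * (X ^ (α + β)) ^ j)) := by
    rw [← prod_mul_distrib]
    exact prod_congr rfl fun j _ => by ring
  rw [modX_theta hα hβ le_rfl, map_mul, map_mul, modX_pochInf hs hs le_rfl,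
    modX_pochInf hα hs le_rfl, modX_pochInf hβ hs le_rfl, ← map_mul, ← map_mul, mul_assoc, hpair,
    hpoch, hfin, mul_sum, map_sum, map_sum]
  exact sum_congr rfl fun k hk =>
    (modX_qPoch_mul_centralQBinom_mul_thetaTerm hα hβ (by simp only [mem_Icc] at hk; omega)).symm

theorem theta_one_one_three_dissection : theta 1 1 = theta 9 9 - 2 * X * theta 3 15 := by
  refine eq_of_forall_modX_eq fun n => ?_
  have h := sum_Icc_thetaTerm_self_three_dissection (-X ^ 1 : ℚ⟦X⟧) n
  rw [show (-X ^ 1 : ℚ⟦X⟧) ^ 9 = -X ^ 9 by ring, show (-X ^ 1 : ℚ⟦X⟧) ^ 3 = -X ^ 3 by ring,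
    show (-X ^ 1 : ℚ⟦X⟧) ^ 15 = -X ^ 15 by ring] at h
  rw [modX_theta one_pos one_pos (N := 3 * n + 1) (by omega), map_sub, map_mul,
    modX_theta (by norm_num) (by norm_num) le_rfl, modX_theta (by norm_num) (by norm_num) le_rfl]
  push_cast
  rw [← map_mul, ← map_sub, h]
  congr 1
  ring

lemma phiNeg_eq_theta : phiNeg = theta 1 1 := by
  rw [phiNeg, theta]
  congr 2
  funext j
  rw [thetaTerm_self, thetaTerm_self, Int.natAbs_neg, show ((j : ℤ) + 1).natAbs = j + 1 by omega,
    pow_one]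
  rcases Nat.even_or_odd (j + 1) with h | h
  · rw [h.neg_one_pow, (h.pow_of_ne_zero two_ne_zero).neg_pow]; module
  · rw [h.neg_one_pow, h.pow.neg_pow]; module

lemma theta_nine_nine_mul_P : theta 9 9 * P 18 = P 9 ^ 2 := by
  rw [jacobi_triple_product (by norm_num) (by norm_num), P_eq_pochInf, P_eq_pochInf,
    pochInf_eq_prod_pochInf (a := 9) (s := 9) 2 (by norm_num) (by norm_num) (by norm_num)]
  norm_num [prod_range_succ]
  ring

lemma theta_three_fifteen_mul_P : theta 3 15 * (P 6 * P 9) = P 3 * P 18 ^ 2 := by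
  simp only [jacobi_triple_product (α := 3) (β := 15) (by norm_num) (by norm_num), P_eq_pochInf]
  rw [pochInf_eq_prod_pochInf (a := 3) (s := 3) 6 (by norm_num) (by norm_num) (by norm_num),
    pochInf_eq_prod_pochInf (a := 6) (s := 6) 3 (by norm_num) (by norm_num) (by norm_num),
    pochInf_eq_prod_pochInf (a := 9) (s := 9) 2 (by norm_num) (by norm_num) (by norm_num)]
  norm_num [prod_range_succ]
  ring

lemma constantCoeff_P (a : ℕ) (ha : 0 < a) : constantCoeff (P a) = 1 := by
  rw [← coeff_zero_eq_constantCoeff_apply, P, pprod, coeff_mk]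
  simp [ha.ne']

end PowerSeriesQ

/-- The 3-dissection of `φ(−q)² = (q;q)_∞²/(−q;q)_∞²`:
`φ(−q)² = (q^9;q^9)_∞^4/(q^{18};q^{18})_∞²
  − 4q·(q^{18};q^{18})_∞ (q^9;q^9)_∞ (q^3;q^3)_∞/(q^6;q^6)_∞
  + 4q²·(q^{18};q^{18})_∞^4 (q^3;q^3)_∞²/((q^9;q^9)_∞² (q^6;q^6)_∞²)`. -/
theorem phi_neg_sq_three_dissection :
    phiNeg ^ 2 =
      P 9 ^ 4 * (P 18 ^ 2)⁻¹ -
        (PowerSeries.C (R := ℚ) 4) * X * (P 18 * P 9 * P 3 * (P 6)⁻¹) +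
        (PowerSeries.C (R := ℚ) 4) * X ^ 2 * (P 18 ^ 4 * P 3 ^ 2 * (P 9 ^ 2 * P 6 ^ 2)⁻¹) := by
  have hA := theta_nine_nine_mul_P
  have hB := theta_three_fifteen_mul_P
  have hne (a : ℕ) (ha : 0 < a) : P a ≠ 0 := fun h => by simpa [h] using constantCoeff_P a ha
  have h₁ : P 9 ^ 4 * (P 18 ^ 2)⁻¹ = theta 9 9 ^ 2 := by
    rw [eq_comm, PowerSeries.eq_mul_inv_iff_mul_eq (by simp [constantCoeff_P])]
    linear_combination (theta 9 9 * P 18 + P 9 ^ 2) * hA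
  have h₂ : P 18 * P 9 * P 3 * (P 6)⁻¹ = theta 9 9 * theta 3 15 := by
    rw [eq_comm, PowerSeries.eq_mul_inv_iff_mul_eq (by simp [constantCoeff_P])]
    refine mul_right_cancel₀ (mul_ne_zero (hne 18 (by norm_num)) (hne 9 (by norm_num))) ?_
    linear_combination (theta 3 15 * (P 6 * P 9)) * hA + P 9 ^ 2 * hB
  have h₃ : P 18 ^ 4 * P 3 ^ 2 * (P 9 ^ 2 * P 6 ^ 2)⁻¹ = theta 3 15 ^ 2 := by
    rw [eq_comm, PowerSeries.eq_mul_inv_iff_mul_eq (by simp [constantCoeff_P])]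
    linear_combination (theta 3 15 * (P 6 * P 9) + P 3 * P 18 ^ 2) * hB
  rw [h₁, h₂, h₃, phiNeg_eq_theta, theta_one_one_three_dissection,
    show (4 : ℚ) = 2 * 2 by norm_num, map_mul, map_ofNat]
  ring
end
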